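/- arXiv:1512.03278 — 3 statements merged into one kernel-verified Lean document; each statement's English description precedes it below -/
import Mathlib

section
/- For every positive integer n and real s > 0, the series ∑_{d≥1} r_d(n)/d^{1+s} converges and equals σ_{-s}(n)/ζ(1+s), where r_d(n) is the Ramanujan sum and σ_{-s}(n) = ∑_{e ∣ n} e^{-s}. -/
/-!
Expanding the condition `gcd(b, d) = 1` with the Möbius function and summing the resulting
geometric series of `d`-th roots of unity gives `r_d(n) = ∑_{e ∣ gcd(d, n)} e μ(d/e)`: the
sequence `d ↦ r_d(n)` is the Dirichlet convolution of `e ↦ e · [e ∣ n]` with `μ`. For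
`Re w > 1` both factors have absolutely convergent L-series, `∑_{e ∣ n} e^{1-w}` (a finite sum)
and `L(μ, w) = 1/ζ(w)`, so the L-series of the convolution converges to their product.
-/

/-- The Ramanujan sum `r_d(n) = ∑_{b mod d, gcd(b,d)=1} e(bn/d)`. -/
noncomputable def ramanujanSum (d n : ℕ) : ℂ :=
  ∑ b ∈ (Finset.range d).filter (fun b => Nat.gcd b d = 1),
    Complex.exp (2 * Real.pi * Complex.I * b * n / d)

open ArithmeticFunction Finset LSeries.notation
open scoped ArithmeticFunction.Moebius

theorem ArithmeticFunction.sum_divisors_moebius {R : Type*} [Ring R] (m : ℕ) :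
    ∑ e ∈ m.divisors, (μ e : R) = if m = 1 then 1 else 0 := by
  simpa only [coe_zeta_mul_apply, intCoe_apply, one_apply] using
    congrArg (· m) (coe_zeta_mul_coe_moebius (R := R))

theorem ArithmeticFunction.sum_divisors_moebius_filter_dvd {R : Type*} [Ring R] {d : ℕ}
    (hd : d ≠ 0) (b : ℕ) :
    ∑ e ∈ d.divisors with e ∣ b, (μ e : R) = if b.Coprime d then 1 else 0 := by
  have hfilter : {e ∈ d.divisors | e ∣ b} = (b.gcd d).divisors := by
    rw [← Nat.divisors_filter_dvd_of_dvd hd (Nat.gcd_dvd_right b d)]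
    exact filter_congr fun e he ↦ by simp [Nat.dvd_gcd_iff, (Nat.mem_divisors.mp he).1]
  rw [hfilter, sum_divisors_moebius]

theorem IsPrimitiveRoot.sum_range_pow_pow {R : Type*} [CommRing R] [IsDomain R] {ζ : R} {k : ℕ}
    (hζ : IsPrimitiveRoot ζ k) (n : ℕ) :
    ∑ b ∈ range k, (ζ ^ n) ^ b = if k ∣ n then (k : R) else 0 := by
  split_ifs with hkn
  · simp [(hζ.pow_eq_one_iff_dvd n).mpr hkn]
  · have hne : ζ ^ n ≠ 1 := mt (hζ.pow_eq_one_iff_dvd n).mp hkn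
    refine eq_zero_of_ne_zero_of_mul_left_eq_zero (sub_ne_zero_of_ne hne.symm) ?_
    rw [mul_neg_geom_sum, ← pow_mul, mul_comm, pow_mul, hζ.pow_eq_one, one_pow, sub_self]

theorem Finset.sum_range_mul_filter_dvd {M : Type*} [AddCommMonoid M] (f : ℕ → M) {e : ℕ}
    (he : e ≠ 0) (q : ℕ) :
    ∑ b ∈ range (e * q) with e ∣ b, f b = ∑ c ∈ range q, f (e * c) := by
  have hmultiples :
      {b ∈ range (e * q) | e ∣ b} = (range q).map ⟨(e * ·), mul_right_injective₀ he⟩ := by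
    ext b
    simp only [mem_filter, mem_range, mem_map, Function.Embedding.coeFn_mk]
    constructor
    · rintro ⟨hb, c, rfl⟩
      exact ⟨c, Nat.lt_of_mul_lt_mul_left hb, rfl⟩
    · rintro ⟨c, hc, rfl⟩
      exact ⟨Nat.mul_lt_mul_of_pos_left hc (Nat.pos_of_ne_zero he), dvd_mul_right e c⟩
  rw [hmultiples, sum_map]
  rfl

theorem IsPrimitiveRoot.sum_coprime_pow_pow {R : Type*} [CommRing R] [IsDomain R] {ζ : R}
    {d : ℕ} (hζ : IsPrimitiveRoot ζ d) (hd : d ≠ 0) (n : ℕ) :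
    ∑ b ∈ range d with b.Coprime d, (ζ ^ n) ^ b =
      ∑ e ∈ d.divisors, (if e ∣ n then (e : R) else 0) * μ (d / e) := by
  calc ∑ b ∈ range d with b.Coprime d, (ζ ^ n) ^ b
      = ∑ b ∈ range d, ∑ e ∈ d.divisors,
          if e ∣ b then (μ e : R) * (ζ ^ n) ^ b else 0 := by
        rw [sum_filter]
        refine sum_congr rfl fun b _ ↦ ?_
        rw [← sum_filter, ← sum_mul, sum_divisors_moebius_filter_dvd hd, ite_mul, one_mul,
          zero_mul]
    _ = ∑ e ∈ d.divisors, μ e * ∑ b ∈ range d with e ∣ b, (ζ ^ n) ^ b := by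
        rw [sum_comm]
        simp_rw [← sum_filter, mul_sum]
    _ = ∑ e ∈ d.divisors, μ e * (if d / e ∣ n then ((d / e : ℕ) : R) else 0) := by
        refine sum_congr rfl fun e he ↦ ?_
        obtain ⟨hed, -⟩ := Nat.mem_divisors.mp he
        have he0 : e ≠ 0 := ne_zero_of_dvd_ne_zero hd hed
        have hζe : IsPrimitiveRoot (ζ ^ e) (d / e) := hζ.pow_of_dvd he0 hed
        rw [← Nat.mul_div_cancel' hed, sum_range_mul_filter_dvd _ he0, Nat.mul_div_cancel' hed,
          ← hζe.sum_range_pow_pow n]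
        simp_rw [← pow_mul]
        ring_nf
    _ = ∑ e ∈ d.divisors, (if e ∣ n then (e : R) else 0) * μ (d / e) := by
        rw [← Nat.sum_div_divisors]
        refine sum_congr rfl fun e he ↦ ?_
        rw [Nat.div_div_self (Nat.mem_divisors.mp he).1 hd, mul_comm]

theorem ramanujanSum_eq_sum_divisors {d : ℕ} (hd : d ≠ 0) (n : ℕ) :
    ramanujanSum d n = ∑ e ∈ d.divisors, (if e ∣ n then (e : ℂ) else 0) * μ (d / e) := by
  rw [← (Complex.isPrimitiveRoot_exp d hd).sum_coprime_pow_pow hd n, ramanujanSum]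
  refine sum_congr rfl fun b _ ↦ ?_
  rw [← Complex.exp_nat_mul, ← Complex.exp_nat_mul]
  ring_nf

theorem ramanujanSum_eq_convolution {d : ℕ} (hd : d ≠ 0) (n : ℕ) :
    ramanujanSum d n = ((fun e ↦ if e ∣ n then (e : ℂ) else 0) ⍟ ↗μ) d := by
  rw [ramanujanSum_eq_sum_divisors hd, LSeries.convolution_def]
  exact (Nat.sum_divisorsAntidiagonal fun a b ↦ (if a ∣ n then (a : ℂ) else 0) * μ b).symm

theorem LSeriesHasSum_ite_dvd {n : ℕ} (hn : n ≠ 0) (s : ℂ) :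
    LSeriesHasSum (fun e ↦ if e ∣ n then (e : ℂ) else 0) s
      (∑ e ∈ n.divisors, (e : ℂ) ^ (1 - s)) := by
  have hterm : ∀ e ∈ n.divisors,
      LSeries.term (fun e ↦ if e ∣ n then (e : ℂ) else 0) s e = (e : ℂ) ^ (1 - s) := by
    intro e he
    obtain ⟨hen, -⟩ := Nat.mem_divisors.mp he
    have he0 : e ≠ 0 := ne_zero_of_dvd_ne_zero hn hen
    rw [LSeries.term_of_ne_zero he0, if_pos hen, Complex.cpow_sub _ _ (Nat.cast_ne_zero.mpr he0),
      Complex.cpow_one]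
  rw [← sum_congr rfl hterm]
  refine hasSum_sum_of_ne_finset_zero fun e he ↦ ?_
  rcases eq_or_ne e 0 with rfl | he0
  · exact LSeries.term_zero _ _
  · rw [LSeries.term_of_ne_zero he0, if_neg fun hen ↦ he (Nat.mem_divisors.mpr ⟨hen, hn⟩),
      zero_div]

theorem LSeriesHasSum_moebius {s : ℂ} (hs : 1 < s.re) :
    LSeriesHasSum ↗μ s (riemannZeta s)⁻¹ := by
  have hL : L ↗μ s = (riemannZeta s)⁻¹ :=
    eq_inv_of_mul_eq_one_right <|
      LSeries_zeta_eq_riemannZeta hs ▸ LSeries_zeta_mul_Lseries_moebius hs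
  exact hL ▸ (LSeriesSummable_moebius_iff.mpr hs).LSeriesHasSum

theorem LSeriesHasSum_ramanujanSum {n : ℕ} (hn : n ≠ 0) {s : ℂ} (hs : 1 < s.re) :
    LSeriesHasSum (ramanujanSum · n) s
      ((∑ e ∈ n.divisors, (e : ℂ) ^ (1 - s)) / riemannZeta s) :=
  (LSeriesHasSum_congr _ _ fun hd ↦ (ramanujanSum_eq_convolution hd n).symm).mp
    ((LSeriesHasSum_ite_dvd hn s).convolution (LSeriesHasSum_moebius hs))

/-- For `n ≥ 1` and real `s > 0`, `∑_{d ≥ 1} r_d(n)/d^{1+s} = σ_{-s}(n)/ζ(1+s)`. -/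
theorem stmt0 (n : ℕ) (hn : 0 < n) (s : ℝ) (hs : 0 < s) :
    HasSum (fun d : ℕ => ramanujanSum (d + 1) n / ((d + 1 : ℂ) ^ ((1 : ℂ) + (s : ℂ))))
      ((∑ e ∈ n.divisors, (e : ℂ) ^ (-(s : ℂ))) / riemannZeta (1 + (s : ℂ))) := by
  have hre : 1 < (1 + (s : ℂ)).re := by simpa using hs
  have h := (hasSum_nat_add_iff' 1).mpr (LSeriesHasSum_ramanujanSum hn.ne' hre)
  simpa only [LSeries.term_of_ne_zero (Nat.add_one_ne_zero _), sum_range_one, LSeries.term_zero,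
    sub_zero, sub_add_cancel_left, Nat.cast_add_one] using h
end

section
/- Fix an integer k ≥ 2 and a positive integer α. For Re(s) > 1, ∑_{m≥1} τ_k(αm) m^{-s} = H_α(s) ζ(s)^k, where H_α(s) = (∑_{m ∣ α^∞} τ_k(αm) m^{-s}) ∏_{p ∣ α}(1 − p^{-s})^k. Moreover, for any σ₀ > 0 and ε > 0, H_α(s) ≪_{k,σ₀,ε} α^ε uniformly on Re(s) ≥ σ₀. -/
/-!
For `k, α ≥ 1` the function `m ↦ τ_k(αm) / τ_k(α)` is multiplicative. A multiplicative function
is the Dirichlet convolution of its restriction to the numbers whose prime factors all divide `α`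
with its restriction to the numbers coprime to `α`. Here the second restriction is `χ₀ τ_k`, with
`χ₀` the principal character mod `α`, whose L-series is `(ζ(s) ∏_{p ∣ α} (1 - p^{-s}))^k`; this
gives the identity. The first restriction has an Euler product over `p ∣ α`, so `H_α(s)` is
`τ_k(α)` times a product of local factors, and `τ_k(p^{a+e}) ≤ τ_k(p^a) τ_k(p^e)` bounds each of
them by `D = (2 / (1 - 2^{-σ₀}))^k`. Finally `D^{ω(α)} τ_k(α) ≪ α^ε`: the local factor
`D τ_k(p^a)` is `≪ 2^{aε}` for every `p`, and at most `p^{aε}` once `p` is large.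
-/

/-- The `k`-fold divisor function: the number of ordered factorizations of `n`
into `k` positive integers. -/
noncomputable def tauk (k n : ℕ) : ℕ := Nat.card {f : Fin k → ℕ // ∏ i, f i = n}

/-- `H_α(s) = (∑_{m ∣ α^∞} τ_k(αm) m^{-s}) ∏_{p ∣ α}(1 − p^{-s})^k`. -/
noncomputable def Hfun (k α : ℕ) (s : ℂ) : ℂ :=
  (∑' m : {m : ℕ // 0 < m ∧ ∀ p : ℕ, p.Prime → p ∣ m → p ∣ α},
      (tauk k (α * m.1) : ℂ) * (m.1 : ℂ) ^ (-s)) *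
    ∏ p ∈ α.primeFactors, (1 - (p : ℂ) ^ (-s)) ^ k

open ArithmeticFunction Finset Filter LSeries
open scoped ArithmeticFunction.zeta LSeries.notation

theorem Nat.Prime.dvd_of_dvd_pow_of_ne_one {p i d : ℕ} (hp : p.Prime) (hd : d ∣ p ^ i)
    (hd1 : d ≠ 1) : p ∣ d := by
  obtain ⟨j, -, rfl⟩ := (Nat.dvd_prime_pow hp).1 hd
  exact dvd_pow_self p (by rintro rfl; exact hd1 (pow_zero p))

theorem toArithmeticFunction_apply {R : Type*} [Zero R] (f : ℕ → R) {n : ℕ} (hn : n ≠ 0) :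
    toArithmeticFunction f n = f n := by
  simp [toArithmeticFunction, hn]

namespace ArithmeticFunction.IsMultiplicative

section CommMonoidWithZero

variable {R : Type*} [CommMonoidWithZero R] {f : ArithmeticFunction R}

theorem apply_eq_prod_of_primeFactors_subset (hf : f.IsMultiplicative) {n : ℕ} (hn : n ≠ 0)
    {s : Finset ℕ} (hs : n.primeFactors ⊆ s) : f n = ∏ p ∈ s, f (p ^ n.factorization p) := by
  rw [hf.multiplicative_factorization f hn]
  exact Finsupp.prod_of_support_subset _ (by simpa using hs) _ fun p _ => by
    rw [pow_zero, hf.map_one]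

theorem mul_eq_mul_of_factorization (hf : f.IsMultiplicative) {x y z w : ℕ}
    (hx : x ≠ 0) (hy : y ≠ 0) (hz : z ≠ 0) (hw : w ≠ 0)
    (h : ∀ p, x.factorization p = z.factorization p ∧ y.factorization p = w.factorization p ∨
      x.factorization p = w.factorization p ∧ y.factorization p = z.factorization p) :
    f x * f y = f z * f w := by
  set s := (x * y * z * w).primeFactors
  have hs : ∀ {n}, n ∣ x * y * z * w → n.primeFactors ⊆ s := fun hn =>
    Nat.primeFactors_mono hn (by positivity)
  rw [hf.apply_eq_prod_of_primeFactors_subset hx (hs (by use y * z * w; ring)),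
    hf.apply_eq_prod_of_primeFactors_subset hy (hs (by use x * z * w; ring)),
    hf.apply_eq_prod_of_primeFactors_subset hz (hs (by use x * y * w; ring)),
    hf.apply_eq_prod_of_primeFactors_subset hw (hs (dvd_mul_left _ _)),
    ← prod_mul_distrib, ← prod_mul_distrib]
  refine prod_congr rfl fun p _ => ?_
  rcases h p with ⟨h₁, h₂⟩ | ⟨h₁, h₂⟩
  · rw [h₁, h₂]
  · rw [h₁, h₂, mul_comm]

theorem mul_mul_mul_of_coprime (hf : f.IsMultiplicative) {a m n : ℕ} (ha : a ≠ 0)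
    (hmn : m.Coprime n) : f (a * (m * n)) * f a = f (a * m) * f (a * n) := by
  rcases eq_or_ne m 0 with rfl | hm
  · rw [(Nat.coprime_zero_left n).mp hmn]; simp
  rcases eq_or_ne n 0 with rfl | hn
  · rw [(Nat.coprime_zero_right m).mp hmn]; simp
  refine hf.mul_eq_mul_of_factorization (by positivity) ha (by positivity) (by positivity)
    fun p => ?_
  simp only [Nat.factorization_mul ha (mul_ne_zero hm hn), Nat.factorization_mul ha hm,
    Nat.factorization_mul ha hn, Nat.factorization_mul hm hn, Finsupp.add_apply]
  have : m.factorization p = 0 ∨ n.factorization p = 0 := by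
    by_contra! h
    obtain rfl := Nat.eq_one_of_dvd_coprimes hmn (Nat.dvd_of_factorization_pos h.1)
      (Nat.dvd_of_factorization_pos h.2)
    simp at h
  omega

theorem mul_prime_pow_mul (hf : f.IsMultiplicative) {a p : ℕ} (ha : a ≠ 0) (hp : p.Prime)
    (e : ℕ) :
    f (a * p ^ e) * f (p ^ a.factorization p) = f a * f (p ^ (a.factorization p + e)) := by
  have hpow : ∀ j, p ^ j ≠ 0 := fun j => pow_ne_zero j hp.ne_zero
  refine hf.mul_eq_mul_of_factorization (mul_ne_zero ha (hpow e)) (hpow _) ha (hpow _)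
    fun q => ?_
  simp only [Nat.factorization_mul ha (hpow e), Finsupp.add_apply,
    hp.factorization_pow, Finsupp.single_apply]
  by_cases hpq : p = q
  · subst hpq; simp
  · simp [hpq]

end CommMonoidWithZero

section CommSemiring

variable {R : Type*} [CommSemiring R] {f : ArithmeticFunction R}

theorem toArithmeticFunction_indicator (hf : f.IsMultiplicative) {S : Set ℕ} (h1 : 1 ∈ S)
    (hS : ∀ {m n}, m ≠ 0 → n ≠ 0 → m.Coprime n → (m * n ∈ S ↔ m ∈ S ∧ n ∈ S)) :
    (toArithmeticFunction (S.indicator f)).IsMultiplicative := by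
  refine IsMultiplicative.iff_ne_zero.2 ⟨by simp [toArithmeticFunction, h1, hf.map_one],
    fun {m n} hm hn hmn => ?_⟩
  simp only [toArithmeticFunction_apply _ (mul_ne_zero hm hn), toArithmeticFunction_apply _ hm,
    toArithmeticFunction_apply _ hn]
  by_cases hmS : m ∈ S <;> by_cases hnS : n ∈ S <;>
    simp [hmS, hnS, hS hm hn hmn, hf.map_mul_of_coprime hmn]

theorem toArithmeticFunction_indicator_factoredNumbers (hf : f.IsMultiplicative)
    (s : Finset ℕ) :
    (toArithmeticFunction ((Nat.factoredNumbers s).indicator f)).IsMultiplicative :=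
  hf.toArithmeticFunction_indicator (by simp [Nat.mem_factoredNumbers]) fun hm hn _ =>
    ⟨fun h => ⟨Nat.mem_factoredNumbers_of_dvd h (dvd_mul_right _ _),
      Nat.mem_factoredNumbers_of_dvd h (dvd_mul_left _ _)⟩,
    fun h => Nat.mul_mem_factoredNumbers h.1 h.2⟩

theorem toArithmeticFunction_indicator_coprime (hf : f.IsMultiplicative) (α : ℕ) :
    (toArithmeticFunction ({n | n.Coprime α}.indicator f)).IsMultiplicative :=
  hf.toArithmeticFunction_indicator (Nat.coprime_one_left α) fun _ _ _ =>
    Nat.coprime_mul_iff_left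

theorem eq_mul_of_factoredNumbers_coprime (hf : f.IsMultiplicative) {α : ℕ} (hα : α ≠ 0) :
    f = toArithmeticFunction ((Nat.factoredNumbers α.primeFactors).indicator f) *
      toArithmeticFunction ({n | n.Coprime α}.indicator f) := by
  have hsmooth := hf.toArithmeticFunction_indicator_factoredNumbers α.primeFactors
  have hcoprime := hf.toArithmeticFunction_indicator_coprime α
  refine (hf.eq_iff_eq_on_prime_powers f _ (hsmooth.mul hcoprime)).2 fun p i hp => ?_
  have hpi : p ^ i ≠ 0 := pow_ne_zero i hp.ne_zero
  rw [mul_apply]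
  by_cases hpα : p ∣ α
  · have hsm : p ^ i ∈ Nat.factoredNumbers α.primeFactors := Nat.mem_factoredNumbers'.2
      fun q hq hqp => by
        rw [(Nat.prime_dvd_prime_iff_eq hq hp).1 (hq.dvd_of_dvd_pow hqp)]
        exact Nat.mem_primeFactors.2 ⟨hp, hpα, hα⟩
    rw [sum_eq_single_of_mem (p ^ i, 1) (Nat.mem_divisorsAntidiagonal.2 ⟨mul_one _, hpi⟩),
      hcoprime.map_one, mul_one, toArithmeticFunction_apply _ hpi, Set.indicator_of_mem hsm]
    · rintro ⟨d, e⟩ hde hne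
      have he : e ≠ 1 := by
        rintro rfl
        exact hne (by simpa using (Nat.mem_divisorsAntidiagonal.1 hde).1)
      have hcop : ¬ e.Coprime α := Nat.not_coprime_of_dvd_of_dvd hp.one_lt
        (hp.dvd_of_dvd_pow_of_ne_one (Dvd.intro_left d (Nat.mem_divisorsAntidiagonal.1 hde).1)
          he) hpα
      simp [toArithmeticFunction, hcop]
  · have hcop : (p ^ i).Coprime α := Nat.Coprime.pow_left i ((hp.coprime_iff_not_dvd).2 hpα)
    rw [sum_eq_single_of_mem (1, p ^ i) (Nat.mem_divisorsAntidiagonal.2 ⟨one_mul _, hpi⟩),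
      hsmooth.map_one, one_mul, toArithmeticFunction_apply _ hpi,
      Set.indicator_of_mem (s := {n : ℕ | n.Coprime α}) hcop]
    · rintro ⟨d, e⟩ hde hne
      have hd : d ≠ 1 := by
        rintro rfl
        exact hne (by simpa using (Nat.mem_divisorsAntidiagonal.1 hde).1)
      have hsm : d ∉ Nat.factoredNumbers α.primeFactors := fun h => hpα
        (Nat.dvd_of_mem_primeFactors (Nat.mem_factoredNumbers'.1 h p hp
          (hp.dvd_of_dvd_pow_of_ne_one (Dvd.intro e (Nat.mem_divisorsAntidiagonal.1 hde).1) hd)))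
      simp [toArithmeticFunction, hsm]

end CommSemiring

end ArithmeticFunction.IsMultiplicative

theorem Nat.add_add_choose_le_add_choose_mul_add_choose (a b r : ℕ) :
    (a + b + r).choose r ≤ (a + r).choose r * (b + r).choose r := by
  induction r with
  | zero => simp
  | succ r ih =>
    have hab := Nat.add_one_mul_choose_eq (a + b + r) r
    have ha := Nat.add_one_mul_choose_eq (a + r) r
    have hb := Nat.add_one_mul_choose_eq (b + r) r
    simp only [← add_assoc] at *
    refine Nat.le_of_mul_le_mul_right (c := (r + 1) * (r + 1)) ?_ (by positivity)
    have hfactor : (r + 1) * (a + b + r + 1) ≤ (a + r + 1) * (b + r + 1) := by nlinarith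
    calc (a + b + r + 1).choose (r + 1) * ((r + 1) * (r + 1))
        = (r + 1) * ((a + b + r + 1) * (a + b + r).choose r) := by rw [hab]; ring
      _ ≤ (r + 1) * (a + b + r + 1) * ((a + r).choose r * (b + r).choose r) := by
          rw [← mul_assoc]; gcongr
      _ ≤ (a + r + 1) * (b + r + 1) * ((a + r).choose r * (b + r).choose r) := by gcongr
      _ = (a + r + 1).choose (r + 1) * (b + r + 1).choose (r + 1) * ((r + 1) * (r + 1)) := by
          rw [show (a + r + 1) * (b + r + 1) * ((a + r).choose r * (b + r).choose r)
            = ((a + r + 1) * (a + r).choose r) * ((b + r + 1) * (b + r).choose r) by ring,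
            ha, hb]; ring

theorem zeta_pow_apply_prime_pow (r j : ℕ) {p : ℕ} (hp : p.Prime) :
    (ζ ^ (r + 1)) (p ^ j) = (j + r).choose r := by
  induction r generalizing j with
  | zero => simp [zeta_apply_ne (pow_ne_zero j hp.ne_zero)]
  | succ r ih =>
    rw [pow_succ', zeta_mul_apply, Nat.sum_divisors_prime_pow hp]
    simp_rw [ih]
    rw [Nat.sum_range_add_choose, add_assoc]

theorem zeta_pow_apply_pos {k n : ℕ} (hk : k ≠ 0) (hn : n ≠ 0) : 0 < (ζ ^ k) n := by
  obtain ⟨r, rfl⟩ := Nat.exists_eq_add_one_of_ne_zero hk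
  rw [isMultiplicative_zeta.pow.multiplicative_factorization _ hn]
  exact Finset.prod_pos fun p hp => by
    dsimp only
    rw [zeta_pow_apply_prime_pow r _ (Nat.prime_of_mem_primeFactors (by simpa using hp))]
    exact Nat.choose_pos (by omega)

theorem zeta_pow_mul_prime_pow_le {k : ℕ} (hk : k ≠ 0) {a p : ℕ} (ha : a ≠ 0) (hp : p.Prime)
    (e : ℕ) : (ζ ^ k) (a * p ^ e) ≤ (ζ ^ k) a * (ζ ^ k) (p ^ e) := by
  obtain ⟨r, rfl⟩ := Nat.exists_eq_add_one_of_ne_zero hk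
  refine Nat.le_of_mul_le_mul_right ?_
    (zeta_pow_apply_pos hk (pow_ne_zero (a.factorization p) hp.ne_zero))
  rw [isMultiplicative_zeta.pow.mul_prime_pow_mul ha hp e, mul_right_comm, mul_assoc]
  refine Nat.mul_le_mul_left _ ?_
  simp only [zeta_pow_apply_prime_pow r _ hp]
  exact Nat.add_add_choose_le_add_choose_mul_add_choose _ _ _

theorem hasSum_zeta_pow_prime_pow_mul_geometric (k : ℕ) {p : ℕ} (hp : p.Prime) {y : ℝ}
    (hy : |y| < 1) : HasSum (fun e => ((ζ ^ k) (p ^ e) : ℝ) * y ^ e) (1 / (1 - y) ^ k) := by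
  cases k with
  | zero =>
    convert hasSum_ite_eq 0 (1 : ℝ) using 1
    · ext e
      rcases eq_or_ne e 0 with rfl | he <;> simp [one_apply, hp.ne_one, *]
    · simp
  | succ r =>
    simp_rw [zeta_pow_apply_prime_pow r _ hp]
    exact hasSum_choose_mul_geometric_of_norm_lt_one r hy

theorem tauk_eq_card_finMulAntidiag (k : ℕ) {n : ℕ} (hn : n ≠ 0) :
    tauk k n = #(Nat.finMulAntidiag k n) := by
  rw [← Nat.card_eq_finsetCard]
  exact Nat.card_congr <| Equiv.subtypeEquivRight fun f => by simp [hn]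

theorem tauk_zero_left {n : ℕ} (hn : n ≠ 0) : tauk 0 n = if n = 1 then 1 else 0 := by
  rw [tauk_eq_card_finMulAntidiag 0 hn]
  split_ifs with h
  · simp [h, Nat.finMulAntidiag_one]
  · simp [Nat.finMulAntidiag_zero_left h]

theorem tauk_succ (k : ℕ) {n : ℕ} (hn : n ≠ 0) :
    tauk (k + 1) n = ∑ x ∈ n.divisorsAntidiagonal, tauk k x.2 := by
  rw [tauk_eq_card_finMulAntidiag _ hn, sum_congr rfl fun x hx =>
    tauk_eq_card_finMulAntidiag k (Nat.right_ne_zero_of_mem_divisorsAntidiagonal hx),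
    ← card_sigma]
  refine card_nbij' (fun f => ⟨(f 0, ∏ i, Fin.tail f i), Fin.tail f⟩)
    (fun y => Fin.cons y.1.1 y.2) ?_ ?_ ?_ ?_
  · intro f hf
    simp only [coe_sigma, Set.mem_sigma_iff, mem_coe, Nat.mem_divisorsAntidiagonal,
      Nat.mem_finMulAntidiag] at hf ⊢
    rw [Fin.prod_univ_succ] at hf
    refine ⟨hf, trivial, fun h => hn ?_⟩
    rw [← hf.1, ← Fin.tail_def, h, mul_zero]
  · rintro ⟨⟨d, e⟩, g⟩ hy
    simp only [coe_sigma, Set.mem_sigma_iff, mem_coe, Nat.mem_divisorsAntidiagonal,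
      Nat.mem_finMulAntidiag] at hy ⊢
    rw [Fin.prod_univ_succ]
    simp [hy.2.1, hy.1.1, hn]
  · intro f _
    exact Fin.cons_self_tail f
  · rintro ⟨⟨d, e⟩, g⟩ hy
    simp only [coe_sigma, Set.mem_sigma_iff, mem_coe, Nat.mem_finMulAntidiag] at hy
    simp [Fin.tail, hy.2.1]

theorem tauk_eq_zeta_pow (k : ℕ) {n : ℕ} (hn : n ≠ 0) : tauk k n = (ζ ^ k) n := by
  induction k generalizing n with
  | zero => rw [tauk_zero_left hn, pow_zero, one_apply]
  | succ k ih =>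
    rw [tauk_succ k hn, pow_succ', mul_apply]
    refine sum_congr rfl fun x hx => ?_
    rw [zeta_apply_ne (Nat.left_ne_zero_of_mem_divisorsAntidiagonal hx), one_mul,
      ih (Nat.right_ne_zero_of_mem_divisorsAntidiagonal hx)]

theorem Nat.prod_primeFactors_rpow_factorization {n : ℕ} (hn : n ≠ 0) (ε : ℝ) :
    ∏ p ∈ n.primeFactors, ((p : ℝ) ^ ε) ^ n.factorization p = (n : ℝ) ^ ε := by
  simp_rw [Real.rpow_pow_comm (Nat.cast_nonneg _)]
  rw [Real.finsetProd_rpow _ _ (fun p _ => by positivity)]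
  congr 1
  exact_mod_cast Nat.prod_factorization_pow_eq_self hn

theorem exists_prod_primeFactors_le_mul_rpow {g : ℕ → ℕ → ℝ} (hg0 : ∀ p a, 0 ≤ g p a)
    {M ε : ℝ} (hM : 1 ≤ M) (hε : 0 < ε) (hg : ∀ p a, p.Prime → g p a ≤ M * (2 ^ ε) ^ a) :
    ∃ C, ∀ n : ℕ, n ≠ 0 → ∏ p ∈ n.primeFactors, g p (n.factorization p) ≤ C * n ^ ε := by
  obtain ⟨N, hN⟩ := eventually_atTop.1 <| ((tendsto_rpow_atTop hε).comp
    tendsto_natCast_atTop_atTop).eventually_ge_atTop (M * 2 ^ ε)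
  refine ⟨M ^ N, fun n hn => ?_⟩
  have hlocal : ∀ p ∈ n.primeFactors, g p (n.factorization p) ≤
      (if p < N then M else 1) * ((p : ℝ) ^ ε) ^ n.factorization p := by
    intro p hp
    have hp2 : (2 : ℝ) ^ ε ≤ (p : ℝ) ^ ε := Real.rpow_le_rpow (by norm_num)
      (by exact_mod_cast (Nat.prime_of_mem_primeFactors hp).two_le) hε.le
    refine (hg _ _ (Nat.prime_of_mem_primeFactors hp)).trans ?_
    split_ifs with hpN
    · gcongr
    · have ha : n.factorization p ≠ 0 :=
        (Nat.prime_of_mem_primeFactors hp).factorization_pos_of_dvd hn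
          (Nat.dvd_of_mem_primeFactors hp) |>.ne'
      calc M * (2 ^ ε) ^ n.factorization p
          ≤ M ^ n.factorization p * (2 ^ ε) ^ n.factorization p := by
            gcongr; exact le_self_pow₀ hM ha
        _ = (M * 2 ^ ε) ^ n.factorization p := (mul_pow _ _ _).symm
        _ ≤ ((p : ℝ) ^ ε) ^ n.factorization p := by
            gcongr
            exact hN p (not_lt.1 hpN)
        _ = 1 * ((p : ℝ) ^ ε) ^ n.factorization p := (one_mul _).symm
  have hsmall : ∏ p ∈ n.primeFactors, (if p < N then M else 1) ≤ M ^ N := by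
    rw [prod_ite, prod_const, prod_const_one, mul_one]
    refine pow_le_pow_right₀ hM ((card_le_card fun p hp => ?_).trans (card_range N).le)
    exact mem_range.2 (mem_filter.1 hp).2
  calc ∏ p ∈ n.primeFactors, g p (n.factorization p)
      ≤ ∏ p ∈ n.primeFactors, (if p < N then M else 1) * ((p : ℝ) ^ ε) ^ n.factorization p :=
        prod_le_prod (fun p _ => hg0 _ _) hlocal
    _ ≤ M ^ N * n ^ ε := by
        rw [prod_mul_distrib, Nat.prod_primeFactors_rpow_factorization hn ε]
        gcongr

theorem exists_pow_card_primeFactors_mul_zeta_pow_le (k : ℕ) {D : ℝ} (hD : 1 ≤ D) {ε : ℝ}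
    (hε : 0 < ε) : ∃ C, ∀ n : ℕ, n ≠ 0 → D ^ #n.primeFactors * (ζ ^ k) n ≤ C * n ^ ε := by
  set y : ℝ := (2 ^ ε)⁻¹
  have hy0 : 0 ≤ y := by positivity
  have hy1 : y < 1 := inv_lt_one_of_one_lt₀ (Real.one_lt_rpow one_lt_two hε)
  have hM : 1 ≤ D * (1 / (1 - y) ^ k) := one_le_mul_of_one_le_of_one_le hD
    (one_le_one_div (pow_pos (by linarith) k) (pow_le_one₀ (by linarith) (by linarith)))
  obtain ⟨C, hC⟩ := exists_prod_primeFactors_le_mul_rpow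
    (g := fun p a => D * ((ζ ^ k) (p ^ a) : ℝ)) (fun _ _ => by positivity) hM hε
    fun p a hp => by
      have hle := le_hasSum (hasSum_zeta_pow_prime_pow_mul_geometric k hp
        (abs_lt.2 ⟨by linarith, hy1⟩)) a fun _ _ => by positivity
      calc D * ((ζ ^ k) (p ^ a) : ℝ) = D * (((ζ ^ k) (p ^ a) : ℝ) * y ^ a) * (2 ^ ε) ^ a := by
            rw [inv_pow, mul_assoc, mul_assoc, inv_mul_cancel₀ (by positivity), mul_one]
        _ ≤ D * (1 / (1 - y) ^ k) * (2 ^ ε) ^ a := by gcongr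
  refine ⟨C, fun n hn => le_of_eq_of_le ?_ (hC n hn)⟩
  rw [prod_mul_distrib, prod_const,
    isMultiplicative_zeta.pow.apply_eq_prod_of_primeFactors_subset hn subset_rfl]
  push_cast
  rfl

theorem DirichletCharacter.LSeriesHasSum_mul_zeta_pow {N : ℕ} (χ : DirichletCharacter ℂ N)
    {s : ℂ} (hs : 1 < s.re) (k : ℕ) :
    LSeriesHasSum (↗χ * ↗(ζ ^ k)) s (LSeries ↗χ s ^ k) := by
  induction k with
  | zero =>
    have hδ : ↗χ * ↗(ζ ^ 0) = δ := by
      ext n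
      by_cases hn : n = 1 <;> simp [one_apply, LSeries.delta, hn]
    rw [hδ, pow_zero, LSeriesHasSum, funext (term_delta s)]
    exact hasSum_ite_eq 1 1
  | succ k ih =>
    have hχ : LSeriesHasSum (↗χ * ↗ζ) s (LSeries ↗χ s) :=
      (LSeriesHasSum_congr s _ fun hn => by simp [hn]).1
        (χ.LSeriesSummable_of_one_lt_re hs).LSeriesHasSum
    have hconv : ↗(ζ ^ (k + 1)) = ↗ζ ⍟ ↗(ζ ^ k) := by
      ext n
      simp [pow_succ', LSeries.convolution_def, mul_apply]
    rw [hconv, ← DirichletCharacter.mul_convolution_distrib, pow_succ']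
    exact hχ.convolution ih

theorem DirichletCharacter.LSeries_one_eq_riemannZeta_mul_prod {α : ℕ} [NeZero α] {s : ℂ}
    (hs : 1 < s.re) :
    LSeries ↗(1 : DirichletCharacter ℂ α) s =
      riemannZeta s * ∏ p ∈ α.primeFactors, (1 - (p : ℂ) ^ (-s)) := by
  have h := DirichletCharacter.LSeries_changeLevel (one_dvd α) (1 : DirichletCharacter ℂ 1) hs
  rw [DirichletCharacter.changeLevel_one] at h
  rw [h, DirichletCharacter.LSeries_modOne_eq, LSeries_one_eq_riemannZeta hs]
  congr 1
  refine prod_congr rfl fun p _ => ?_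
  rw [MulChar.one_apply (isUnit_of_subsingleton _), one_mul]

theorem abs_inv_rpow_lt_one {p : ℕ} (hp : 1 < p) {σ : ℝ} (hσ : 0 < σ) :
    |((p : ℝ) ^ σ)⁻¹| < 1 := by
  rw [abs_inv, abs_of_pos (by positivity)]
  exact inv_lt_one_of_one_lt₀ (Real.one_lt_rpow (by exact_mod_cast hp) hσ)

noncomputable def shiftedTau (k α : ℕ) : ArithmeticFunction ℂ :=
  toArithmeticFunction fun n => ((ζ ^ k) (α * n) : ℂ) / (ζ ^ k) α

noncomputable def eulerFactor (k α p : ℕ) (s : ℂ) : ℂ :=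
  ∑' e : ℕ, shiftedTau k α (p ^ e) / ((p ^ e : ℕ) : ℂ) ^ s

section shiftedTau

variable {k α : ℕ}

theorem shiftedTau_apply {n : ℕ} (hn : n ≠ 0) :
    shiftedTau k α n = ((ζ ^ k) (α * n) : ℂ) / (ζ ^ k) α :=
  toArithmeticFunction_apply _ hn

theorem cast_zeta_pow_apply_ne_zero (hk : k ≠ 0) (hα : α ≠ 0) : ((ζ ^ k) α : ℂ) ≠ 0 := by
  exact_mod_cast (zeta_pow_apply_pos hk hα).ne'

theorem isMultiplicative_shiftedTau (hk : k ≠ 0) (hα : α ≠ 0) :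
    (shiftedTau k α).IsMultiplicative := by
  have hτ := cast_zeta_pow_apply_ne_zero hk hα
  refine IsMultiplicative.iff_ne_zero.2 ⟨by rw [shiftedTau_apply one_ne_zero, mul_one,
    div_self hτ], fun {m n} hm hn hmn => ?_⟩
  have h := congrArg (Nat.cast : ℕ → ℂ)
    ((isMultiplicative_zeta.pow (k := k)).mul_mul_mul_of_coprime hα hmn)
  push_cast at h
  rw [shiftedTau_apply (mul_ne_zero hm hn), shiftedTau_apply hm, shiftedTau_apply hn]
  field_simp
  linear_combination h

theorem shiftedTau_of_coprime (hk : k ≠ 0) (hα : α ≠ 0) {n : ℕ} (hn : n.Coprime α) :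
    shiftedTau k α n = (ζ ^ k) n := by
  rcases eq_or_ne n 0 with rfl | hn0
  · simp
  rw [shiftedTau_apply hn0, isMultiplicative_zeta.pow.map_mul_of_coprime hn.symm, Nat.cast_mul,
    mul_div_cancel_left₀ _ (cast_zeta_pow_apply_ne_zero hk hα)]

theorem norm_shiftedTau_prime_pow_le (hk : k ≠ 0) (hα : α ≠ 0) {p : ℕ} (hp : p.Prime) (e : ℕ) :
    ‖shiftedTau k α (p ^ e)‖ ≤ (ζ ^ k) (p ^ e) := by
  rw [shiftedTau_apply (pow_ne_zero e hp.ne_zero), norm_div, Complex.norm_natCast,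
    Complex.norm_natCast, div_le_iff₀ (by exact_mod_cast zeta_pow_apply_pos hk hα)]
  exact_mod_cast (zeta_pow_mul_prime_pow_le hk hα hp e).trans_eq (mul_comm _ _)

theorem norm_shiftedTau_prime_pow_div_le (hk : k ≠ 0) (hα : α ≠ 0) {p : ℕ} (hp : p.Prime)
    (s : ℂ) (e : ℕ) :
    ‖shiftedTau k α (p ^ e) / ((p ^ e : ℕ) : ℂ) ^ s‖ ≤
      (ζ ^ k) (p ^ e) * ((p : ℝ) ^ s.re)⁻¹ ^ e := by
  rw [norm_div, Complex.norm_natCast_cpow_of_pos (pow_pos hp.pos e), Nat.cast_pow,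
    ← Real.rpow_pow_comm (Nat.cast_nonneg p), div_eq_mul_inv, inv_pow]
  gcongr
  exact norm_shiftedTau_prime_pow_le hk hα hp e

theorem norm_eulerFactor_le {p : ℕ} (hk : k ≠ 0) (hα : α ≠ 0) (hp : p.Prime) {s : ℂ}
    (hs : 0 < s.re) : ‖eulerFactor k α p s‖ ≤ 1 / (1 - ((p : ℝ) ^ s.re)⁻¹) ^ k :=
  tsum_of_norm_bounded (hasSum_zeta_pow_prime_pow_mul_geometric k hp
    (abs_inv_rpow_lt_one hp.one_lt hs)) (norm_shiftedTau_prime_pow_div_le hk hα hp s)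

theorem hasSum_factoredNumbers_shiftedTau_div_cpow (hk : k ≠ 0) (hα : α ≠ 0) {s : ℂ}
    (hs : 0 < s.re) :
    HasSum (fun m : Nat.factoredNumbers α.primeFactors => shiftedTau k α m / (m : ℂ) ^ s)
      (∏ p ∈ α.primeFactors, eulerFactor k α p s) := by
  have hmul := isMultiplicative_shiftedTau hk hα
  set f : ℕ → ℂ := fun n => shiftedTau k α n / (n : ℂ) ^ s
  have hf1 : f 1 = 1 := by simp [f, hmul.map_one]
  have hsum : ∀ {p}, p.Prime → Summable fun e => ‖f (p ^ e)‖ := fun {p} hp => by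
    refine (hasSum_zeta_pow_prime_pow_mul_geometric k hp
      (abs_inv_rpow_lt_one hp.one_lt hs)).summable.of_nonneg_of_le (fun _ => norm_nonneg _)
      fun e => ?_
    simpa [f] using norm_shiftedTau_prime_pow_div_le hk hα hp s e
  have hE := (EulerProduct.summable_and_hasSum_factoredNumbers_prod_filter_prime_tsum hf1
    (fun {m n} hmn => by simp only [f, hmul.map_mul_of_coprime hmn, Nat.cast_mul,
      Complex.natCast_mul_natCast_cpow, mul_div_mul_comm]) hsum α.primeFactors).2
  rwa [filter_true_of_mem fun p hp => Nat.prime_of_mem_primeFactors hp] at hE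

theorem LSeriesHasSum_indicator_shiftedTau (hk : k ≠ 0) (hα : α ≠ 0) {s : ℂ}
    (hs : 0 < s.re) :
    LSeriesHasSum ↗(toArithmeticFunction
        ((Nat.factoredNumbers α.primeFactors).indicator (shiftedTau k α))) s
      (∏ p ∈ α.primeFactors, eulerFactor k α p s) := by
  have hterm : term ↗(toArithmeticFunction
      ((Nat.factoredNumbers α.primeFactors).indicator (shiftedTau k α))) s =
      (Nat.factoredNumbers α.primeFactors).indicator fun n => shiftedTau k α n / (n : ℂ) ^ s := by
    ext n
    rcases eq_or_ne n 0 with rfl | hn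
    · simp [Nat.factoredNumbers]
    by_cases hmem : n ∈ Nat.factoredNumbers α.primeFactors <;>
      simp [term_of_ne_zero hn, toArithmeticFunction_apply _ hn, hmem]
  rw [LSeriesHasSum, hterm]
  exact hasSum_subtype_iff_indicator.1 (hasSum_factoredNumbers_shiftedTau_div_cpow hk hα hs)

theorem LSeriesHasSum_shiftedTau (hk : k ≠ 0) (hα : α ≠ 0) {s : ℂ} (hs : 1 < s.re) :
    LSeriesHasSum ↗(shiftedTau k α) s ((∏ p ∈ α.primeFactors, eulerFactor k α p s) *
      (riemannZeta s * ∏ p ∈ α.primeFactors, (1 - (p : ℂ) ^ (-s))) ^ k) := by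
  have : NeZero α := ⟨hα⟩
  have hcoprime : LSeriesHasSum ↗(toArithmeticFunction ({n | n.Coprime α}.indicator
      (shiftedTau k α))) s ((riemannZeta s * ∏ p ∈ α.primeFactors, (1 - (p : ℂ) ^ (-s))) ^ k) := by
    rw [← DirichletCharacter.LSeries_one_eq_riemannZeta_mul_prod hs]
    refine (LSeriesHasSum_congr s _ fun {n} hn => ?_).1
      ((1 : DirichletCharacter ℂ α).LSeriesHasSum_mul_zeta_pow hs k)
    simp only [Pi.mul_apply, toArithmeticFunction_apply _ hn]
    by_cases hc : n.Coprime α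
    · rw [Set.indicator_of_mem (s := {n : ℕ | n.Coprime α}) hc, shiftedTau_of_coprime hk hα hc,
        MulChar.one_apply ((ZMod.isUnit_iff_coprime n α).2 hc), one_mul]
    · rw [Set.indicator_of_notMem (s := {n : ℕ | n.Coprime α}) hc,
        MulChar.map_nonunit _ (mt (ZMod.isUnit_iff_coprime n α).1 hc), zero_mul]
  rw [(isMultiplicative_shiftedTau hk hα).eq_mul_of_factoredNumbers_coprime hα]
  exact LSeriesHasSum_mul (LSeriesHasSum_indicator_shiftedTau hk hα (by linarith)) hcoprime

theorem Hfun_eq_mul_prod_eulerFactor (hk : k ≠ 0) (hα : α ≠ 0) {s : ℂ} (hs : 0 < s.re) :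
    Hfun k α s =
      (ζ ^ k) α * ∏ p ∈ α.primeFactors, eulerFactor k α p s * (1 - (p : ℂ) ^ (-s)) ^ k := by
  have hset : {m : ℕ | 0 < m ∧ ∀ p : ℕ, p.Prime → p ∣ m → p ∣ α} =
      Nat.factoredNumbers α.primeFactors := by
    ext m
    rw [Nat.mem_factoredNumbers_iff_primeFactors_subset]
    simp only [Set.mem_ofPred_eq, subset_iff, Nat.mem_primeFactors, Nat.pos_iff_ne_zero]
    aesop
  have hsum : (∑' m : {m : ℕ // 0 < m ∧ ∀ p : ℕ, p.Prime → p ∣ m → p ∣ α},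
      (tauk k (α * m.1) : ℂ) * (m.1 : ℂ) ^ (-s)) =
      ∑' m : Nat.factoredNumbers α.primeFactors, (ζ ^ k) α * (shiftedTau k α m / (m : ℂ) ^ s) :=
    (tsum_congr_set_coe (fun m : ℕ => (tauk k (α * m) : ℂ) * (m : ℂ) ^ (-s)) hset).trans <|
      tsum_congr fun m => by
        have hm := Nat.ne_zero_of_mem_factoredNumbers m.2
        rw [tauk_eq_zeta_pow k (mul_ne_zero hα hm), shiftedTau_apply hm, Complex.cpow_neg]
        field_simp [cast_zeta_pow_apply_ne_zero hk hα]
  rw [Hfun, hsum, tsum_mul_left, (hasSum_factoredNumbers_shiftedTau_div_cpow hk hα hs).tsum_eq,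
    prod_mul_distrib, mul_assoc]

theorem LSeriesHasSum_zeta_pow_apply_mul_left (hk : k ≠ 0) (hα : α ≠ 0) {s : ℂ} (hs : 1 < s.re) :
    LSeriesHasSum (fun n => ((ζ ^ k) (α * n) : ℂ)) s (Hfun k α s * riemannZeta s ^ k) := by
  have h := (LSeriesHasSum_shiftedTau hk hα hs).smul ((ζ ^ k) α : ℂ)
  rw [Hfun_eq_mul_prod_eulerFactor hk hα (by linarith), prod_mul_distrib, prod_pow]
  refine (LSeriesHasSum_congr s _ fun {n} hn => ?_).1 (by convert h using 1; ring)
  simp only [Pi.smul_apply, smul_eq_mul, shiftedTau_apply hn]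
  exact mul_div_cancel₀ _ (cast_zeta_pow_apply_ne_zero hk hα)

theorem norm_eulerFactor_mul_le {p : ℕ} (hk : k ≠ 0) (hα : α ≠ 0) (hp : p.Prime) {σ₀ : ℝ}
    (hσ₀ : 0 < σ₀) {s : ℂ} (hs : σ₀ ≤ s.re) :
    ‖eulerFactor k α p s * (1 - (p : ℂ) ^ (-s)) ^ k‖ ≤ (2 / (1 - (2 ^ σ₀)⁻¹)) ^ k := by
  set y := ((p : ℝ) ^ s.re)⁻¹
  have hy₀ : (2 ^ σ₀ : ℝ)⁻¹ < 1 := inv_lt_one_of_one_lt₀ (Real.one_lt_rpow one_lt_two hσ₀)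
  have hy : y ≤ (2 ^ σ₀)⁻¹ := inv_anti₀ (by positivity) <| (Real.rpow_le_rpow zero_le_two
    (by exact_mod_cast hp.two_le) hσ₀.le).trans <|
      Real.rpow_le_rpow_of_exponent_le (by exact_mod_cast hp.one_lt.le) hs
  have hy1 : y < 1 := hy.trans_lt hy₀
  have hnorm : ‖1 - (p : ℂ) ^ (-s)‖ ≤ 2 := by
    refine (norm_sub_le _ _).trans ?_
    rw [norm_one, Complex.norm_natCast_cpow_of_pos hp.pos, Complex.neg_re,
      Real.rpow_neg (Nat.cast_nonneg p)]
    linarith [show y ≤ 1 from hy1.le]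
  have hy₀' : 0 < 1 - (2 ^ σ₀ : ℝ)⁻¹ := by linarith
  calc ‖eulerFactor k α p s * (1 - (p : ℂ) ^ (-s)) ^ k‖
      = ‖eulerFactor k α p s‖ * ‖1 - (p : ℂ) ^ (-s)‖ ^ k := by rw [norm_mul, norm_pow]
    _ ≤ 1 / (1 - y) ^ k * 2 ^ k := by
        gcongr
        exact norm_eulerFactor_le hk hα hp (hσ₀.trans_le hs)
    _ ≤ 1 / (1 - (2 ^ σ₀)⁻¹) ^ k * 2 ^ k := by gcongr
    _ = (2 / (1 - (2 ^ σ₀)⁻¹)) ^ k := by rw [div_pow]; ring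

theorem norm_Hfun_le (hk : k ≠ 0) (hα : α ≠ 0) {σ₀ : ℝ} (hσ₀ : 0 < σ₀) {s : ℂ}
    (hs : σ₀ ≤ s.re) :
    ‖Hfun k α s‖ ≤ ((2 / (1 - (2 ^ σ₀)⁻¹)) ^ k) ^ #α.primeFactors * (ζ ^ k) α := by
  rw [Hfun_eq_mul_prod_eulerFactor hk hα (hσ₀.trans_le hs), norm_mul, Complex.norm_natCast,
    norm_prod, mul_comm, ← prod_const]
  gcongr with p hp
  exact norm_eulerFactor_mul_le hk hα (Nat.prime_of_mem_primeFactors hp) hσ₀ hs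

theorem hasSum_tauk_mul_cpow (hk : k ≠ 0) (hα : α ≠ 0) {s : ℂ} (hs : 1 < s.re) :
    HasSum (fun m : ℕ => (tauk k (α * (m + 1)) : ℂ) * ((m + 1 : ℂ) ^ (-s)))
      (Hfun k α s * riemannZeta s ^ k) := by
  have h := (hasSum_nat_add_iff' 1).2 (LSeriesHasSum_zeta_pow_apply_mul_left hk hα hs)
  rw [range_one, sum_singleton, term_zero, sub_zero] at h
  refine h.congr_fun fun m => ?_
  rw [term_of_ne_zero m.succ_ne_zero, tauk_eq_zeta_pow k (mul_ne_zero hα m.succ_ne_zero),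
    Complex.cpow_neg, div_eq_mul_inv]
  push_cast
  rfl

end shiftedTau

/-- For `Re s > 1`, `∑_m τ_k(αm) m^{-s} = H_α(s) ζ(s)^k`; moreover for `σ₀, ε > 0` one has
`H_α(s) ≪_{k,σ₀,ε} α^ε` uniformly on `Re s ≥ σ₀`. -/
theorem stmt4 (k : ℕ) (hk : 2 ≤ k) :
    (∀ α : ℕ, 0 < α → ∀ s : ℂ, 1 < s.re →
      HasSum (fun m : ℕ => (tauk k (α * (m + 1)) : ℂ) * ((m + 1 : ℂ) ^ (-s)))
        (Hfun k α s * riemannZeta s ^ k)) ∧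
    ∀ σ₀ ε : ℝ, 0 < σ₀ → 0 < ε → ∃ C : ℝ, ∀ α : ℕ, 0 < α → ∀ s : ℂ, σ₀ ≤ s.re →
      ‖Hfun k α s‖ ≤ C * (α : ℝ) ^ ε := by
  have hk0 : k ≠ 0 := by omega
  refine ⟨fun α hα s hs => hasSum_tauk_mul_cpow hk0 hα.ne' hs, fun σ₀ ε hσ₀ hε => ?_⟩
  have hy₀ : (2 ^ σ₀ : ℝ)⁻¹ < 1 := inv_lt_one_of_one_lt₀ (Real.one_lt_rpow one_lt_two hσ₀)
  have hD : 1 ≤ (2 / (1 - (2 ^ σ₀ : ℝ)⁻¹)) ^ k :=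
    one_le_pow₀ <| (one_le_div (by linarith)).2 <| by
      linarith [show (0 : ℝ) ≤ (2 ^ σ₀)⁻¹ by positivity]
  obtain ⟨C, hC⟩ := exists_pow_card_primeFactors_mul_zeta_pow_le k hD hε
  exact ⟨C, fun α hα s hs => (norm_Hfun_le hk0 hα.ne' hσ₀ hs).trans (hC α hα.ne')⟩
end

section
/- Let Y ≥ 1, X, Q, U, R > 0, and let w be a smooth function supported on an interval [a,b] with |w^{(j)}(t)| ≤ C_j X U^{-j} for all j ≥ 0. Let H be a smooth real-valued function on [a,b] with |H'(t)| ≥ cR for all t and |H^{(j)}(t)| ≤ C_j Y Q^{-j} for j ≥ 2. Then for every A ≥ 0, |∫ w(t) e^{iH(t)} dt| ≪_A (b − a) X [ (QR/√Y)^{-A} + (RU)^{-A} ]. -/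
open MeasureTheory Set Filter Complex
open scoped ContDiff

noncomputable section

namespace BKY8

lemma iteratedDeriv_ofReal' {f : ℝ → ℝ} (hf : ContDiff ℝ ∞ f) (n : ℕ) :
    iteratedDeriv n (fun t => Complex.ofReal (f t)) =
      fun x => Complex.ofReal (iteratedDeriv n f x) := by
  induction n with
  | zero => simp
  | succ n ih =>
    have h1 : ContDiff ℝ ∞ (iteratedDeriv n f) := by
      rw [iteratedDeriv_eq_iterate]; exact hf.iterate_deriv n
    have hdf : Differentiable ℝ (iteratedDeriv n f) :=
      h1.differentiable (by simp)
    funext x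
    rw [iteratedDeriv_succ, iteratedDeriv_succ, ih]
    exact (((hdf x).hasDerivAt).ofReal_comp).deriv

structure Ctx (Cj : ℕ → ℝ) (c : ℝ) where
  Y : ℝ
  X : ℝ
  Q : ℝ
  U : ℝ
  R : ℝ
  a : ℝ
  b : ℝ
  w : ℝ → ℂ
  H : ℝ → ℝ
  hc : 0 < c
  hY : 1 ≤ Y
  hX : 0 < X
  hQ : 0 < Q
  hU : 0 < U
  hR : 0 < R
  hab : a ≤ b
  hw : ContDiff ℝ ∞ w
  hsupp : tsupport w ⊆ Set.Icc a b
  hwb : ∀ (j : ℕ) (t : ℝ), ‖iteratedDeriv j w t‖ ≤ Cj j * X * U⁻¹ ^ j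
  hH : ContDiff ℝ ∞ H
  hH1 : ∀ t ∈ Set.Icc a b, c * R ≤ |deriv H t|
  hHj : ∀ j : ℕ, 2 ≤ j → ∀ t ∈ Set.Icc a b, |iteratedDeriv j H t| ≤ Cj j * Y * Q⁻¹ ^ j
  hRU : 1 ≤ R * U
  hQR : Real.sqrt Y ≤ Q * R

namespace Ctx

variable {Cj : ℕ → ℝ} {c : ℝ} (Γ : Ctx Cj c)

def M : ℝ := max Γ.U⁻¹ (Real.sqrt Γ.Y / Γ.Q)
def V : Set ℝ := {t | deriv Γ.H t ≠ 0}
def v : ℝ → ℂ := fun t => (Complex.ofReal (deriv Γ.H t))⁻¹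
def vt : ℝ → ℂ := fun t => (Complex.I * Complex.ofReal (deriv Γ.H t))⁻¹
def Ph : ℝ → ℂ := fun t => Complex.exp (Complex.I * Complex.ofReal (Γ.H t))
def P (f : ℝ → ℂ) : ℝ → ℂ := deriv (fun t => f t * Γ.vt t)

lemma hsqY : 1 ≤ Real.sqrt Γ.Y := by
  rw [show (1:ℝ) = Real.sqrt 1 by simp]
  exact Real.sqrt_le_sqrt Γ.hY

lemma hsqY0 : 0 < Real.sqrt Γ.Y := lt_of_lt_of_le one_pos Γ.hsqY

lemma hM0 : 0 < Γ.M := lt_of_lt_of_le (inv_pos.2 Γ.hU) (le_max_left _ _)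

lemma hMR : Γ.M ≤ Γ.R := by
  apply max_le
  · rw [inv_eq_one_div, div_le_iff₀ Γ.hU]; nlinarith [Γ.hRU]
  · rw [div_le_iff₀ Γ.hQ]; nlinarith [Γ.hQR]

lemma hQM : Γ.Q⁻¹ ≤ Γ.M := by
  refine le_trans ?_ (le_max_right _ _)
  rw [inv_eq_one_div]
  exact div_le_div_of_nonneg_right Γ.hsqY Γ.hQ.le

lemma hUM : Γ.U⁻¹ ≤ Γ.M := le_max_left _ _

lemma hIccV : Set.Icc Γ.a Γ.b ⊆ Γ.V := by
  intro t ht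
  have h1 := Γ.hH1 t ht
  have h2 : 0 < |deriv Γ.H t| := lt_of_lt_of_le (mul_pos Γ.hc Γ.hR) h1
  simpa [V, abs_pos] using (abs_pos.mp h2)

lemma hVopen : IsOpen Γ.V := by
  have hcont : Continuous (deriv Γ.H) := Γ.hH.continuous_deriv (by exact_mod_cast le_top)
  exact isOpen_compl_singleton.preimage hcont

lemma hUD : UniqueDiffOn ℝ Γ.V := Γ.hVopen.uniqueDiffOn

lemma hH'C : ContDiff ℝ ∞ (deriv Γ.H) := (contDiff_infty_iff_deriv.mp Γ.hH).2

lemma hHC : ContDiff ℝ ∞ (fun t => Complex.ofReal (deriv Γ.H t)) :=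
  (ContinuousLinearMap.contDiff (n := ∞) Complex.ofRealCLM).comp Γ.hH'C

lemma hvOn : ContDiffOn ℝ ∞ Γ.v Γ.V :=
  Γ.hHC.contDiffOn.inv (fun x hx => by simpa [V, Complex.ofReal_ne_zero] using hx)

lemma hvtv : Γ.vt = fun t => (-Complex.I) * Γ.v t := by
  funext t
  simp only [vt, v, mul_inv_rev, Complex.inv_I]
  ring

lemma hvtOn : ContDiffOn ℝ ∞ Γ.vt Γ.V := by
  rw [Γ.hvtv]
  exact contDiffOn_const.mul Γ.hvOn

lemma hv0 : ∀ t ∈ Set.Icc Γ.a Γ.b, ‖Γ.v t‖ ≤ (c * Γ.R)⁻¹ := by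
  intro t ht
  have h1 := Γ.hH1 t ht
  have hpos : (0:ℝ) < c * Γ.R := mul_pos Γ.hc Γ.hR
  simp only [v, norm_inv, Complex.norm_real, Real.norm_eq_abs]
  exact inv_anti₀ hpos h1

lemma hderivv : Set.EqOn (derivWithin Γ.v Γ.V)
    (fun s => -(Complex.ofReal (deriv (deriv Γ.H) s)) * (Γ.v s * Γ.v s)) Γ.V := by
  intro t ht
  simp only [v]
  have hne : (Complex.ofReal (deriv Γ.H t)) ≠ 0 := by
    simpa [V, Complex.ofReal_ne_zero] using ht
  have hd : Differentiable ℝ (deriv Γ.H) :=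
    Γ.hH'C.differentiable (by simp)
  have hg : HasDerivAt (fun s => Complex.ofReal (deriv Γ.H s))
      (Complex.ofReal (deriv (deriv Γ.H) t)) t :=
    ((hd t).hasDerivAt).ofReal_comp
  have hder : HasDerivAt (fun s => (Complex.ofReal (deriv Γ.H s))⁻¹)
      (-(Complex.ofReal (deriv (deriv Γ.H) t)) / (Complex.ofReal (deriv Γ.H t)) ^ 2) t := by
    have h2 := HasDerivAt.scomp (𝕜 := ℝ) (x := t) (h := fun s => Complex.ofReal (deriv Γ.H s)) (hasDerivAt_inv hne) hg
    convert h2 using 1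
    · rfl
    · rfl
    rw [smul_eq_mul]
    ring
  rw [derivWithin_of_isOpen Γ.hVopen ht]
  show deriv (fun s => (Complex.ofReal (deriv Γ.H s))⁻¹) t = _
  rw [hder.deriv, div_eq_mul_inv, pow_two, mul_inv]

lemma hH''C : ContDiff ℝ ∞ (deriv (deriv Γ.H)) := (contDiff_infty_iff_deriv.mp Γ.hH'C).2

lemma hCj (Γ' : Ctx Cj c) (j : ℕ) : 0 ≤ Cj j := by
  by_contra h
  push_neg at h
  have h1 := Γ'.hwb j Γ'.a
  have h2 : Cj j * Γ'.X * Γ'.U⁻¹ ^ j < 0 :=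
    mul_neg_of_neg_of_pos (mul_neg_of_neg_of_pos h Γ'.hX) (pow_pos (inv_pos.2 Γ'.hU) j)
  nlinarith [norm_nonneg (iteratedDeriv j Γ'.w Γ'.a)]

lemma normDW_eq (n : ℕ) (f : ℝ → ℂ) {t : ℝ} (ht : t ∈ Γ.V) :
    iteratedDerivWithin n f Γ.V t = iteratedDeriv n f t := by
  simp only [iteratedDerivWithin, iteratedDeriv,
    iteratedFDerivWithin_of_isOpen n Γ.hVopen ht]

lemma leib (f g : ℝ → ℂ) (hf : ContDiffOn ℝ ∞ f Γ.V) (hg : ContDiffOn ℝ ∞ g Γ.V)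
    {t : ℝ} (ht : t ∈ Γ.V) (n : ℕ) :
    ‖iteratedDerivWithin n (fun s => f s * g s) Γ.V t‖ ≤
      ∑ i ∈ Finset.range (n + 1), (n.choose i : ℝ) * ‖iteratedDerivWithin i f Γ.V t‖ *
        ‖iteratedDerivWithin (n - i) g Γ.V t‖ := by
  rw [← norm_iteratedFDerivWithin_eq_norm_iteratedDerivWithin]
  calc ‖iteratedFDerivWithin ℝ n (fun s => f s * g s) Γ.V t‖
      ≤ ∑ i ∈ Finset.range (n + 1), (n.choose i : ℝ) * ‖iteratedFDerivWithin ℝ i f Γ.V t‖ *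
        ‖iteratedFDerivWithin ℝ (n - i) g Γ.V t‖ :=
        norm_iteratedFDerivWithin_mul_le hf hg Γ.hUD ht (by exact_mod_cast le_top)
    _ = _ := by simp [norm_iteratedFDerivWithin_eq_norm_iteratedDerivWithin]

lemma hYQ : Real.sqrt Γ.Y * Γ.Q⁻¹ ≤ Γ.M := by
  rw [← div_eq_mul_inv]
  exact le_max_right _ _

lemma hYQpow (k : ℕ) : Γ.Y * Γ.Q⁻¹ ^ (k + 2) ≤ Γ.M ^ (k + 2) := by
  have h1 : Γ.Y = Real.sqrt Γ.Y * Real.sqrt Γ.Y :=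
    (Real.mul_self_sqrt (by linarith [Γ.hY])).symm
  have hq : (0:ℝ) ≤ Γ.Q⁻¹ := (inv_pos.2 Γ.hQ).le
  have hsq : (0:ℝ) ≤ Real.sqrt Γ.Y * Γ.Q⁻¹ := mul_nonneg (Real.sqrt_nonneg _) hq
  calc Γ.Y * Γ.Q⁻¹ ^ (k + 2)
      = (Real.sqrt Γ.Y * Γ.Q⁻¹) * (Real.sqrt Γ.Y * Γ.Q⁻¹) * Γ.Q⁻¹ ^ k := by
        rw [pow_add (Γ.Q)⁻¹ k 2]
        nth_rewrite 1 [h1]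
        ring
    _ ≤ Γ.M * Γ.M * Γ.M ^ k := by
        have h2 : Γ.Q⁻¹ ^ k ≤ Γ.M ^ k := pow_le_pow_left₀ hq Γ.hQM k
        have h3 := Γ.hYQ
        have h4 := Γ.hM0.le
        exact mul_le_mul (mul_le_mul h3 h3 hsq h4) h2 (pow_nonneg hq k) (mul_nonneg h4 h4)
    _ = Γ.M ^ (k + 2) := by rw [pow_add]; ring

lemma hMdivR : Γ.M / Γ.R ≤ 1 := (div_le_one Γ.hR).mpr Γ.hMR

end Ctx

lemma vbound (Cj : ℕ → ℝ) (c : ℝ) : ∀ m : ℕ, ∃ E : ℝ, 0 ≤ E ∧ ∀ (Γ : Ctx Cj c),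
    ∀ t ∈ Set.Icc Γ.a Γ.b, ‖iteratedDerivWithin m Γ.v Γ.V t‖ ≤ E * Γ.M ^ m / Γ.R := by
  intro m
  induction m using Nat.strong_induction_on with
  | _ m ih =>
  cases m with
  | zero =>
    refine ⟨max c⁻¹ 0, le_max_right _ _, ?_⟩
    intro Γ t ht
    rw [iteratedDerivWithin_zero]
    calc ‖Γ.v t‖ ≤ (c * Γ.R)⁻¹ := Γ.hv0 t ht
      _ = c⁻¹ / Γ.R := by rw [mul_inv]; ring
      _ ≤ max c⁻¹ 0 * Γ.M ^ 0 / Γ.R := by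
          rw [pow_zero, mul_one]
          exact div_le_div_of_nonneg_right (le_max_left _ _) Γ.hR.le
  | succ m =>
    have ihf : ∀ k, k ≤ m → ∃ E, 0 ≤ E ∧ ∀ (Γ : Ctx Cj c), ∀ t ∈ Set.Icc Γ.a Γ.b,
        ‖iteratedDerivWithin k Γ.v Γ.V t‖ ≤ E * Γ.M ^ k / Γ.R :=
      fun k hk => ih k (by omega)
    choose E' hE'0 hE' using ihf
    set e : ℕ → ℝ := fun k => if h : k ≤ m then E' k h else 0 with he
    have he0 : ∀ k, 0 ≤ e k := by
      intro k; rw [he]; dsimp only; split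
      · exact hE'0 _ _
      · exact le_rfl
    set es : ℝ := ∑ k ∈ Finset.range (m + 1), e k with hes
    have hes0 : 0 ≤ es := Finset.sum_nonneg (fun k _ => he0 k)
    have hesk : ∀ k, k ≤ m → e k ≤ es := by
      intro k hk
      exact Finset.single_le_sum (fun i _ => he0 i) (Finset.mem_range.2 (by omega))
    set cs : ℝ := ∑ k ∈ Finset.range (m + 1), max (Cj (k + 2)) 0 with hcs
    have hcs0 : 0 ≤ cs := Finset.sum_nonneg (fun k _ => le_max_right _ _)
    have hcsk : ∀ k, k ≤ m → max (Cj (k + 2)) 0 ≤ cs := by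
      intro k hk
      exact Finset.single_le_sum (fun i (_ : i ∈ Finset.range (m+1)) => le_max_right (Cj (i+2)) 0)
        (Finset.mem_range.2 (by omega))
    refine ⟨2 ^ m * cs * (2 ^ m * (es * es)),
      mul_nonneg (mul_nonneg (by positivity) hcs0)
        (mul_nonneg (by positivity) (mul_nonneg hes0 hes0)), ?_⟩
    intro Γ t ht
    have htV := Γ.hIccV ht
    have hvk : ∀ k, k ≤ m → ‖iteratedDerivWithin k Γ.v Γ.V t‖ ≤ es * Γ.M ^ k / Γ.R := by
      intro k hk
      refine le_trans (hE' k hk Γ t ht) ?_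
      have h2 : E' k hk ≤ es := by
        have h3 : e k = E' k hk := by rw [he]; dsimp only; rw [dif_pos hk]
        rw [← h3]; exact hesk k hk
      exact div_le_div_of_nonneg_right
        (mul_le_mul_of_nonneg_right h2 (pow_nonneg Γ.hM0.le k)) Γ.hR.le
    -- T1 bound
    have hT1 : ∀ k, k ≤ m →
        ‖iteratedDerivWithin k (fun s => -(Complex.ofReal (deriv (deriv Γ.H) s))) Γ.V t‖ ≤
          cs * Γ.M ^ (k + 2) := by
      intro k hk
      rw [Γ.normDW_eq _ _ htV, iteratedDeriv_fun_neg (𝕜 := ℝ) k _ t, norm_neg,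
        iteratedDeriv_ofReal' Γ.hH''C k]
      have heq : iteratedDeriv k (deriv (deriv Γ.H)) t = iteratedDeriv (k + 2) Γ.H t := by
        rw [show k + 2 = (k + 1) + 1 from rfl, iteratedDeriv_succ', iteratedDeriv_succ']
      rw [Complex.norm_real, Real.norm_eq_abs, heq]
      calc |iteratedDeriv (k + 2) Γ.H t| ≤ Cj (k + 2) * Γ.Y * Γ.Q⁻¹ ^ (k + 2) :=
            Γ.hHj (k + 2) (by omega) t ht
        _ = Cj (k + 2) * (Γ.Y * Γ.Q⁻¹ ^ (k + 2)) := by ring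
        _ ≤ max (Cj (k + 2)) 0 * Γ.M ^ (k + 2) := by
            exact mul_le_mul (le_max_left _ _) (Γ.hYQpow k)
              (mul_nonneg (by linarith [Γ.hY]) (pow_nonneg (inv_pos.2 Γ.hQ).le _))
              (le_max_right _ _)
        _ ≤ cs * Γ.M ^ (k + 2) := by
            have := pow_nonneg Γ.hM0.le (k + 2)
            exact mul_le_mul_of_nonneg_right (hcsk k hk) this
    -- T2 bound
    have hT2 : ∀ k, k ≤ m →
        ‖iteratedDerivWithin (m - k) (fun s => Γ.v s * Γ.v s) Γ.V t‖ ≤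
          2 ^ m * (es * es) * Γ.M ^ (m - k) / Γ.R ^ 2 := by
      intro k hk
      refine le_trans (Γ.leib Γ.v Γ.v Γ.hvOn Γ.hvOn htV (m - k)) ?_
      have hstep : ∀ j ∈ Finset.range (m - k + 1),
          ((m - k).choose j : ℝ) * ‖iteratedDerivWithin j Γ.v Γ.V t‖ *
            ‖iteratedDerivWithin (m - k - j) Γ.v Γ.V t‖ ≤
          ((m - k).choose j : ℝ) * (es * es * Γ.M ^ (m - k) / Γ.R ^ 2) := by
        intro j hj
        rw [Finset.mem_range] at hj
        have hj' : j ≤ m - k := by omega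
        have h1 := hvk j (by omega)
        have h2 := hvk (m - k - j) (by omega)
        have hn1 : (0:ℝ) ≤ ((m-k).choose j : ℝ) := Nat.cast_nonneg _
        have key : es * Γ.M ^ j / Γ.R * (es * Γ.M ^ (m - k - j) / Γ.R) =
            es * es * Γ.M ^ (m - k) / Γ.R ^ 2 := by
          rw [show m - k = j + (m - k - j) by omega, pow_add, pow_two, Nat.add_sub_cancel_left]
          field_simp
        calc ((m - k).choose j : ℝ) * ‖iteratedDerivWithin j Γ.v Γ.V t‖ *
              ‖iteratedDerivWithin (m - k - j) Γ.v Γ.V t‖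
            ≤ ((m - k).choose j : ℝ) * (es * Γ.M ^ j / Γ.R) * (es * Γ.M ^ (m-k-j) / Γ.R) := by
              apply mul_le_mul
              · exact mul_le_mul_of_nonneg_left h1 hn1
              · exact h2
              · exact norm_nonneg _
              · exact mul_nonneg hn1 (div_nonneg
                  (mul_nonneg hes0 (pow_nonneg Γ.hM0.le _)) Γ.hR.le)
          _ = ((m - k).choose j : ℝ) * (es * es * Γ.M ^ (m - k) / Γ.R ^ 2) := by
              rw [mul_assoc, key]
      calc (∑ j ∈ Finset.range (m - k + 1), ((m - k).choose j : ℝ) *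
              ‖iteratedDerivWithin j Γ.v Γ.V t‖ * ‖iteratedDerivWithin (m-k-j) Γ.v Γ.V t‖)
          ≤ ∑ j ∈ Finset.range (m - k + 1),
              ((m - k).choose j : ℝ) * (es * es * Γ.M ^ (m - k) / Γ.R ^ 2) :=
            Finset.sum_le_sum hstep
        _ = (2:ℝ) ^ (m - k) * (es * es * Γ.M ^ (m - k) / Γ.R ^ 2) := by
            rw [← Finset.sum_mul]
            congr 1
            exact_mod_cast Nat.sum_range_choose (m - k)
        _ ≤ 2 ^ m * (es * es) * Γ.M ^ (m - k) / Γ.R ^ 2 := by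
            have h2 : (2:ℝ) ^ (m - k) ≤ 2 ^ m := pow_le_pow_right₀ (by norm_num) (by omega)
            have hM : (0:ℝ) ≤ Γ.M ^ (m - k) := pow_nonneg Γ.hM0.le _
            have hnum : (2:ℝ) ^ (m - k) * (es * es) * Γ.M ^ (m - k) ≤
                2 ^ m * (es * es) * Γ.M ^ (m - k) :=
              mul_le_mul_of_nonneg_right
                (mul_le_mul_of_nonneg_right h2 (mul_nonneg hes0 hes0)) hM
            calc (2:ℝ) ^ (m - k) * (es * es * Γ.M ^ (m - k) / Γ.R ^ 2)
                = (2 ^ (m - k) * (es * es) * Γ.M ^ (m - k)) / Γ.R ^ 2 := by ring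
              _ ≤ (2 ^ m * (es * es) * Γ.M ^ (m - k)) / Γ.R ^ 2 :=
                  div_le_div_of_nonneg_right hnum (by positivity)
    -- main chain
    have h1 : iteratedDerivWithin (m + 1) Γ.v Γ.V t =
        iteratedDerivWithin m (derivWithin Γ.v Γ.V) Γ.V t :=
      congrFun iteratedDerivWithin_succ' t
    have h2 : iteratedDerivWithin m (derivWithin Γ.v Γ.V) Γ.V t =
        iteratedDerivWithin m
          (fun s => -(Complex.ofReal (deriv (deriv Γ.H) s)) * (Γ.v s * Γ.v s)) Γ.V t :=
      iteratedDerivWithin_congr Γ.hderivv htV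
    have hf1 : ContDiffOn ℝ ∞ (fun s => -(Complex.ofReal (deriv (deriv Γ.H) s))) Γ.V :=
      (((ContinuousLinearMap.contDiff (n := ∞) Complex.ofRealCLM).comp Γ.hH''C).neg).contDiffOn
    have hg1 : ContDiffOn ℝ ∞ (fun s => Γ.v s * Γ.v s) Γ.V := Γ.hvOn.mul Γ.hvOn
    rw [h1, h2]
    refine le_trans (Γ.leib _ _ hf1 hg1 htV m) ?_
    have hstep2 : ∀ k ∈ Finset.range (m + 1),
        (m.choose k : ℝ) * ‖iteratedDerivWithin k
            (fun s => -(Complex.ofReal (deriv (deriv Γ.H) s))) Γ.V t‖ *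
          ‖iteratedDerivWithin (m - k) (fun s => Γ.v s * Γ.v s) Γ.V t‖ ≤
        (m.choose k : ℝ) * (cs * (2 ^ m * (es * es)) * Γ.M ^ (m + 2) / Γ.R ^ 2) := by
      intro k hkr
      rw [Finset.mem_range] at hkr
      have hk : k ≤ m := by omega
      have hA := hT1 k hk
      have hB := hT2 k hk
      have hn1 : (0:ℝ) ≤ (m.choose k : ℝ) := Nat.cast_nonneg _
      have key : cs * Γ.M ^ (k + 2) * (2 ^ m * (es * es) * Γ.M ^ (m - k) / Γ.R ^ 2) =
          cs * (2 ^ m * (es * es)) * Γ.M ^ (m + 2) / Γ.R ^ 2 := by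
        rw [show m + 2 = (k + 2) + (m - k) by omega, pow_add]
        field_simp
        ring
      calc (m.choose k : ℝ) * ‖iteratedDerivWithin k
              (fun s => -(Complex.ofReal (deriv (deriv Γ.H) s))) Γ.V t‖ *
            ‖iteratedDerivWithin (m - k) (fun s => Γ.v s * Γ.v s) Γ.V t‖
          ≤ (m.choose k : ℝ) * (cs * Γ.M ^ (k + 2)) *
              (2 ^ m * (es * es) * Γ.M ^ (m - k) / Γ.R ^ 2) := by
            apply mul_le_mul
            · exact mul_le_mul_of_nonneg_left hA hn1
            · exact hB
            · exact norm_nonneg _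
            · exact mul_nonneg hn1 (mul_nonneg hcs0 (pow_nonneg Γ.hM0.le _))
        _ = (m.choose k : ℝ) * (cs * (2 ^ m * (es * es)) * Γ.M ^ (m + 2) / Γ.R ^ 2) := by
            rw [mul_assoc, key]
    calc (∑ k ∈ Finset.range (m + 1), (m.choose k : ℝ) * ‖iteratedDerivWithin k
            (fun s => -(Complex.ofReal (deriv (deriv Γ.H) s))) Γ.V t‖ *
          ‖iteratedDerivWithin (m - k) (fun s => Γ.v s * Γ.v s) Γ.V t‖)
        ≤ ∑ k ∈ Finset.range (m + 1),
            (m.choose k : ℝ) * (cs * (2 ^ m * (es * es)) * Γ.M ^ (m + 2) / Γ.R ^ 2) :=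
          Finset.sum_le_sum hstep2
      _ = (2:ℝ) ^ m * (cs * (2 ^ m * (es * es)) * Γ.M ^ (m + 2) / Γ.R ^ 2) := by
          rw [← Finset.sum_mul]
          congr 1
          exact_mod_cast Nat.sum_range_choose m
      _ ≤ 2 ^ m * cs * (2 ^ m * (es * es)) * Γ.M ^ (m + 1) / Γ.R := by
          have hkey : (2:ℝ) ^ m * (cs * (2 ^ m * (es * es)) * Γ.M ^ (m + 2) / Γ.R ^ 2) =
              (2 ^ m * cs * (2 ^ m * (es * es)) * Γ.M ^ (m + 1) / Γ.R) * (Γ.M / Γ.R) := by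
            rw [show m + 2 = (m + 1) + 1 by omega, pow_add, pow_two]
            field_simp
          rw [hkey]
          have h0 : (0:ℝ) ≤ 2 ^ m * cs * (2 ^ m * (es * es)) * Γ.M ^ (m + 1) / Γ.R :=
            div_nonneg (mul_nonneg (mul_nonneg (mul_nonneg (by positivity) hcs0)
              (mul_nonneg (by positivity) (mul_nonneg hes0 hes0)))
              (pow_nonneg Γ.hM0.le _)) Γ.hR.le
          nlinarith [Γ.hMdivR, div_nonneg Γ.hM0.le Γ.hR.le]

namespace Ctx

variable {Cj : ℕ → ℝ} {c : ℝ} (Γ : Ctx Cj c)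

lemma glue {f : ℝ → ℂ} (hf : ContDiff ℝ ∞ f) (hs : tsupport f ⊆ Set.Icc Γ.a Γ.b) :
    ContDiff ℝ ∞ (fun t => f t * Γ.vt t) := by
  rw [contDiff_iff_contDiffAt]
  intro x
  by_cases hx : x ∈ Γ.V
  · exact hf.contDiffAt.mul (Γ.hvtOn.contDiffAt (Γ.hVopen.mem_nhds hx))
  · have hx' : x ∉ tsupport f := fun h => hx (Γ.hIccV (hs h))
    have h0 : f =ᶠ[nhds x] 0 := notMem_tsupport_iff_eventuallyEq.mp hx'
    have h1 : (fun t => f t * Γ.vt t) =ᶠ[nhds x] 0 := by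
      filter_upwards [h0] with y hy
      simp only [Pi.zero_apply] at hy ⊢
      rw [hy, zero_mul]
    exact (contDiffAt_const (c := (0:ℂ))).congr_of_eventuallyEq h1

lemma Pprops : ∀ i : ℕ, ContDiff ℝ ∞ ((Γ.P)^[i] Γ.w) ∧
    tsupport ((Γ.P)^[i] Γ.w) ⊆ Set.Icc Γ.a Γ.b := by
  intro i
  induction i with
  | zero => exact ⟨Γ.hw, Γ.hsupp⟩
  | succ i ih =>
    obtain ⟨h1, h2⟩ := ih
    have hg := Γ.glue h1 h2
    rw [Function.iterate_succ_apply']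
    constructor
    · exact (contDiff_infty_iff_deriv.mp hg).2
    · have hsub1 : tsupport (Γ.P ((Γ.P)^[i] Γ.w)) ⊆
          tsupport (fun t => ((Γ.P)^[i] Γ.w) t * Γ.vt t) :=
        closure_minimal support_deriv_subset (isClosed_tsupport _)
      have hsub2 : tsupport (fun t => ((Γ.P)^[i] Γ.w) t * Γ.vt t) ⊆
          tsupport ((Γ.P)^[i] Γ.w) :=
        closure_mono (Function.support_mul_subset_left _ _)
      exact (hsub1.trans hsub2).trans h2

end Ctx

lemma wbound (Cj : ℕ → ℝ) (c : ℝ) : ∀ i j : ℕ, ∃ D : ℝ, 0 ≤ D ∧ ∀ (Γ : Ctx Cj c),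
    ∀ t ∈ Set.Icc Γ.a Γ.b,
    ‖iteratedDerivWithin j ((Γ.P)^[i] Γ.w) Γ.V t‖ ≤ D * Γ.X * Γ.M ^ (i + j) / Γ.R ^ i := by
  intro i
  induction i with
  | zero =>
    intro j
    refine ⟨max (Cj j) 0, le_max_right _ _, ?_⟩
    intro Γ t ht
    have htV := Γ.hIccV ht
    rw [Function.iterate_zero_apply, Γ.normDW_eq j _ htV]
    have hM0 := Γ.hM0.le
    calc ‖iteratedDeriv j Γ.w t‖ ≤ Cj j * Γ.X * Γ.U⁻¹ ^ j := Γ.hwb j t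
      _ ≤ max (Cj j) 0 * Γ.X * Γ.M ^ j := by
          have hpow : Γ.U⁻¹ ^ j ≤ Γ.M ^ j := pow_le_pow_left₀ (inv_pos.2 Γ.hU).le Γ.hUM j
          apply mul_le_mul
          · exact mul_le_mul_of_nonneg_right (le_max_left _ _) Γ.hX.le
          · exact hpow
          · exact pow_nonneg (inv_pos.2 Γ.hU).le j
          · exact mul_nonneg (le_max_right _ _) Γ.hX.le
      _ = max (Cj j) 0 * Γ.X * Γ.M ^ (0 + j) / Γ.R ^ 0 := by
          rw [zero_add, pow_zero, div_one]
  | succ i ih =>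
    choose Dp hDp0 hDp using ih
    choose Ev hEv0 hEv using vbound Cj c
    intro j
    set ds : ℝ := ∑ k ∈ Finset.range (j + 2), Dp k with hds
    have hds0 : 0 ≤ ds := Finset.sum_nonneg (fun k _ => hDp0 k)
    have hdsk : ∀ k, k ≤ j + 1 → Dp k ≤ ds := fun k hk =>
      Finset.single_le_sum (fun l _ => hDp0 l) (Finset.mem_range.2 (by omega))
    set vs : ℝ := ∑ k ∈ Finset.range (j + 2), Ev k with hvs
    have hvs0 : 0 ≤ vs := Finset.sum_nonneg (fun k _ => hEv0 k)
    have hvsk : ∀ k, k ≤ j + 1 → Ev k ≤ vs := fun k hk =>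
      Finset.single_le_sum (fun l _ => hEv0 l) (Finset.mem_range.2 (by omega))
    refine ⟨2 ^ (j + 1) * (ds * vs),
      mul_nonneg (by positivity) (mul_nonneg hds0 hvs0), ?_⟩
    intro Γ t ht
    have htV := Γ.hIccV ht
    obtain ⟨hsm, hsup⟩ := Γ.Pprops i
    have hMp := Γ.hM0
    have hRp := Γ.hR
    have hXp := Γ.hX
    -- rewrite as (j+1)-st derivative of the product
    have h1 : iteratedDerivWithin j ((Γ.P)^[i + 1] Γ.w) Γ.V t =
        iteratedDerivWithin (j + 1) (fun s => ((Γ.P)^[i] Γ.w) s * Γ.vt s) Γ.V t := by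
      rw [Function.iterate_succ_apply']
      have e1 : Set.EqOn (Γ.P ((Γ.P)^[i] Γ.w))
          (derivWithin (fun s => ((Γ.P)^[i] Γ.w) s * Γ.vt s) Γ.V) Γ.V := by
        intro s hs
        rw [derivWithin_of_isOpen Γ.hVopen hs]
        rfl
      calc iteratedDerivWithin j (Γ.P ((Γ.P)^[i] Γ.w)) Γ.V t
          = iteratedDerivWithin j
              (derivWithin (fun s => ((Γ.P)^[i] Γ.w) s * Γ.vt s) Γ.V) Γ.V t :=
            iteratedDerivWithin_congr e1 htV
        _ = iteratedDerivWithin (j + 1) (fun s => ((Γ.P)^[i] Γ.w) s * Γ.vt s) Γ.V t :=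
            (congrFun iteratedDerivWithin_succ' t).symm
    rw [h1]
    refine le_trans (Γ.leib _ _ hsm.contDiffOn Γ.hvtOn htV (j + 1)) ?_
    -- bounds for the two factors
    have hvt : ∀ b, b ≤ j + 1 → ‖iteratedDerivWithin b Γ.vt Γ.V t‖ ≤ vs * Γ.M ^ b / Γ.R := by
      intro b hb
      have hsmul : Γ.vt = (-Complex.I) • Γ.v := by
        rw [Γ.hvtv]; funext s; simp [smul_eq_mul]
      have e2 : iteratedDerivWithin b Γ.vt Γ.V t =
          (-Complex.I) • iteratedDerivWithin b Γ.v Γ.V t := by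
        rw [hsmul]
        exact iteratedDerivWithin_const_smul htV Γ.hUD (-Complex.I)
          ((Γ.hvOn t htV).of_le (by exact_mod_cast le_top))
      rw [e2, norm_smul]
      simp only [norm_neg, Complex.norm_I, one_mul]
      refine le_trans (hEv b Γ t ht) ?_
      exact div_le_div_of_nonneg_right
        (mul_le_mul_of_nonneg_right (hvsk b hb) (pow_nonneg hMp.le b)) hRp.le
    have hfk : ∀ k, k ≤ j + 1 → ‖iteratedDerivWithin k ((Γ.P)^[i] Γ.w) Γ.V t‖ ≤
        ds * Γ.X * Γ.M ^ (i + k) / Γ.R ^ i := by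
      intro k hk
      refine le_trans (hDp k Γ t ht) ?_
      exact div_le_div_of_nonneg_right
        (mul_le_mul_of_nonneg_right
          (mul_le_mul_of_nonneg_right (hdsk k hk) hXp.le) (pow_nonneg hMp.le _))
        (pow_nonneg hRp.le i)
    have hstep : ∀ k ∈ Finset.range (j + 2),
        ((j + 1).choose k : ℝ) * ‖iteratedDerivWithin k ((Γ.P)^[i] Γ.w) Γ.V t‖ *
          ‖iteratedDerivWithin (j + 1 - k) Γ.vt Γ.V t‖ ≤
        ((j + 1).choose k : ℝ) * (ds * vs * Γ.X * Γ.M ^ (i + 1 + j) / Γ.R ^ (i + 1)) := by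
      intro k hkr
      rw [Finset.mem_range] at hkr
      have hk : k ≤ j + 1 := by omega
      have hA := hfk k hk
      have hB := hvt (j + 1 - k) (by omega)
      have hn1 : (0:ℝ) ≤ ((j + 1).choose k : ℝ) := Nat.cast_nonneg _
      have key : ds * Γ.X * Γ.M ^ (i + k) / Γ.R ^ i * (vs * Γ.M ^ (j + 1 - k) / Γ.R) =
          ds * vs * Γ.X * Γ.M ^ (i + 1 + j) / Γ.R ^ (i + 1) := by
        rw [show i + 1 + j = (i + k) + (j + 1 - k) by omega, pow_add, pow_succ]
        field_simp
        ring
      calc ((j + 1).choose k : ℝ) * ‖iteratedDerivWithin k ((Γ.P)^[i] Γ.w) Γ.V t‖ *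
            ‖iteratedDerivWithin (j + 1 - k) Γ.vt Γ.V t‖
          ≤ ((j + 1).choose k : ℝ) * (ds * Γ.X * Γ.M ^ (i + k) / Γ.R ^ i) *
              (vs * Γ.M ^ (j + 1 - k) / Γ.R) := by
            apply mul_le_mul
            · exact mul_le_mul_of_nonneg_left hA hn1
            · exact hB
            · exact norm_nonneg _
            · exact mul_nonneg hn1 (div_nonneg
                (mul_nonneg (mul_nonneg hds0 hXp.le) (pow_nonneg hMp.le _))
                (pow_nonneg hRp.le i))
        _ = ((j + 1).choose k : ℝ) * (ds * vs * Γ.X * Γ.M ^ (i + 1 + j) / Γ.R ^ (i + 1)) := by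
            rw [mul_assoc, key]
    calc (∑ k ∈ Finset.range (j + 1 + 1), ((j + 1).choose k : ℝ) *
            ‖iteratedDerivWithin k ((Γ.P)^[i] Γ.w) Γ.V t‖ *
            ‖iteratedDerivWithin (j + 1 - k) Γ.vt Γ.V t‖)
        ≤ ∑ k ∈ Finset.range (j + 2),
            ((j + 1).choose k : ℝ) * (ds * vs * Γ.X * Γ.M ^ (i + 1 + j) / Γ.R ^ (i + 1)) :=
          Finset.sum_le_sum hstep
      _ = (2:ℝ) ^ (j + 1) * (ds * vs * Γ.X * Γ.M ^ (i + 1 + j) / Γ.R ^ (i + 1)) := by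
          rw [← Finset.sum_mul]
          congr 1
          exact_mod_cast Nat.sum_range_choose (j + 1)
      _ = 2 ^ (j + 1) * (ds * vs) * Γ.X * Γ.M ^ (i + 1 + j) / Γ.R ^ (i + 1) := by
          ring

namespace Ctx

variable {Cj : ℕ → ℝ} {c : ℝ} (Γ : Ctx Cj c)

lemma Ph_cont : Continuous Γ.Ph := by
  have h1 : Continuous (fun t => Complex.I * Complex.ofReal (Γ.H t)) :=
    continuous_const.mul (Complex.continuous_ofReal.comp Γ.hH.continuous)
  exact Complex.continuous_exp.comp h1

lemma Ph_norm (t : ℝ) : ‖Γ.Ph t‖ = 1 := by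
  simp only [Ph]
  rw [Complex.norm_exp]
  have h1 : (Complex.I * Complex.ofReal (Γ.H t)).re = 0 := by
    simp [Complex.mul_re]
  rw [h1, Real.exp_zero]

lemma ibp {f : ℝ → ℂ} (hf : ContDiff ℝ ∞ f) (hs : tsupport f ⊆ Set.Icc Γ.a Γ.b) :
    ∫ t, f t * Γ.Ph t = - ∫ t, Γ.P f t * Γ.Ph t := by
  set g : ℝ → ℂ := fun t => f t * Γ.vt t with hgdef
  have hg : ContDiff ℝ ∞ g := Γ.glue hf hs
  have hgs : tsupport g ⊆ Set.Icc Γ.a Γ.b :=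
    (closure_mono (Function.support_mul_subset_left _ _)).trans hs
  have hPfs : tsupport (Γ.P f) ⊆ Set.Icc Γ.a Γ.b :=
    (closure_minimal support_deriv_subset (isClosed_tsupport _)).trans hgs
  have hPf : ContDiff ℝ ∞ (Γ.P f) := (contDiff_infty_iff_deriv.mp hg).2
  set u : ℝ → ℂ := fun t => g t * Γ.Ph t with hudef
  have hder : ∀ x : ℝ, HasDerivAt u (Γ.P f x * Γ.Ph x + f x * Γ.Ph x) x := by
    intro x
    by_cases hx : x ∈ Γ.V
    · have hgd : HasDerivAt g (deriv g x) x :=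
        (hg.differentiable (by simp) x).hasDerivAt
      have hHd : HasDerivAt (fun s => Complex.ofReal (Γ.H s))
          (Complex.ofReal (deriv Γ.H x)) x :=
        ((Γ.hH.differentiable (by simp) x).hasDerivAt).ofReal_comp
      have hIH : HasDerivAt (fun s => Complex.I * Complex.ofReal (Γ.H s))
          (Complex.I * Complex.ofReal (deriv Γ.H x)) x := hHd.const_mul Complex.I
      have hE : HasDerivAt Γ.Ph (Complex.exp (Complex.I * Complex.ofReal (Γ.H x)) *
          (Complex.I * Complex.ofReal (deriv Γ.H x))) x := hIH.cexp
      have hu := hgd.mul hE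
      convert hu using 1
      · rfl
      · rfl
      have hne : Complex.I * Complex.ofReal (deriv Γ.H x) ≠ 0 :=
        mul_ne_zero Complex.I_ne_zero (by simpa [V, Complex.ofReal_ne_zero] using hx)
      have hinv : Γ.vt x * (Complex.I * Complex.ofReal (deriv Γ.H x)) = 1 :=
        inv_mul_cancel₀ hne
      have hsecond : g x * (Complex.exp (Complex.I * Complex.ofReal (Γ.H x)) *
          (Complex.I * Complex.ofReal (deriv Γ.H x))) = f x * Γ.Ph x := by
        have e1 : g x = f x * Γ.vt x := rfl
        have e2 : Γ.Ph x = Complex.exp (Complex.I * Complex.ofReal (Γ.H x)) := rfl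
        rw [e1, e2]
        calc f x * Γ.vt x * (Complex.exp (Complex.I * Complex.ofReal (Γ.H x)) *
              (Complex.I * Complex.ofReal (deriv Γ.H x)))
            = f x * Complex.exp (Complex.I * Complex.ofReal (Γ.H x)) *
              (Γ.vt x * (Complex.I * Complex.ofReal (deriv Γ.H x))) := by ring
          _ = f x * Complex.exp (Complex.I * Complex.ofReal (Γ.H x)) := by
              rw [hinv, mul_one]
      rw [hsecond]
      rfl
    · have hx' : x ∉ Set.Icc Γ.a Γ.b := fun h => hx (Γ.hIccV h)
      have hf0 : f =ᶠ[nhds x] 0 := notMem_tsupport_iff_eventuallyEq.mp (fun h => hx' (hs h))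
      have hg0 : g =ᶠ[nhds x] 0 := notMem_tsupport_iff_eventuallyEq.mp (fun h => hx' (hgs h))
      have hu0 : u =ᶠ[nhds x] 0 := by
        filter_upwards [hg0] with y hy
        show g y * Γ.Ph y = (0 : ℝ → ℂ) y
        simp only [Pi.zero_apply] at hy ⊢
        rw [hy, zero_mul]
      have hu' : HasDerivAt u 0 x := (hu0.hasDerivAt_iff).mpr (hasDerivAt_const x 0)
      have hfx : f x = 0 := image_eq_zero_of_notMem_tsupport (fun h => hx' (hs h))
      have hPfx : Γ.P f x = 0 := by
        have e3 : deriv g x = deriv (0 : ℝ → ℂ) x := hg0.deriv_eq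
        have e4 : Γ.P f x = deriv g x := rfl
        rw [e4, e3]
        exact deriv_const x (0:ℂ)
      rw [hfx, hPfx]
      simpa using hu'
  have hPhc := Γ.Ph_cont
  have hfPh_cont : Continuous (fun t => f t * Γ.Ph t) := hf.continuous.mul hPhc
  have hPfPh_cont : Continuous (fun t => Γ.P f t * Γ.Ph t) := hPf.continuous.mul hPhc
  have hcs1 : HasCompactSupport (fun t => f t * Γ.Ph t) :=
    HasCompactSupport.intro isCompact_Icc (fun x hx => by
      rw [image_eq_zero_of_notMem_tsupport (fun h => hx (hs h)), zero_mul])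
  have hcs2 : HasCompactSupport (fun t => Γ.P f t * Γ.Ph t) :=
    HasCompactSupport.intro isCompact_Icc (fun x hx => by
      rw [image_eq_zero_of_notMem_tsupport (fun h => hx (hPfs h)), zero_mul])
  have hint1 : Integrable (fun t => f t * Γ.Ph t) :=
    hfPh_cont.integrable_of_hasCompactSupport hcs1
  have hint2 : Integrable (fun t => Γ.P f t * Γ.Ph t) :=
    hPfPh_cont.integrable_of_hasCompactSupport hcs2
  have hsupp_tot : Function.support (fun t => Γ.P f t * Γ.Ph t + f t * Γ.Ph t) ⊆
      Set.Ioc (Γ.a - 1) (Γ.b + 1) := by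
    intro x hx
    simp only [Function.mem_support] at hx
    by_contra hxI
    apply hx
    have hxI' : x ∉ Set.Icc Γ.a Γ.b := by
      intro hmem
      rw [Set.mem_Icc] at hmem
      exact hxI ⟨by linarith [hmem.1], by linarith [hmem.2]⟩
    rw [image_eq_zero_of_notMem_tsupport (fun h => hxI' (hs h)),
      image_eq_zero_of_notMem_tsupport (fun h => hxI' (hPfs h)), zero_mul, add_zero]
  have htot : (∫ t, (Γ.P f t * Γ.Ph t + f t * Γ.Ph t)) = 0 := by
    have h1 : (∫ x in (Γ.a - 1)..(Γ.b + 1), (Γ.P f x * Γ.Ph x + f x * Γ.Ph x)) =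
        ∫ x, (Γ.P f x * Γ.Ph x + f x * Γ.Ph x) :=
      intervalIntegral.integral_eq_integral_of_support_subset hsupp_tot
    rw [← h1]
    have h2 : (∫ x in (Γ.a - 1)..(Γ.b + 1), (Γ.P f x * Γ.Ph x + f x * Γ.Ph x)) =
        u (Γ.b + 1) - u (Γ.a - 1) :=
      intervalIntegral.integral_eq_sub_of_hasDerivAt (fun x _ => hder x)
        ((hPfPh_cont.add hfPh_cont).intervalIntegrable _ _)
    rw [h2]
    have hmb : (Γ.b + 1) ∉ Set.Icc Γ.a Γ.b := by
      rw [Set.mem_Icc]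
      intro h
      linarith [h.2]
    have hma : (Γ.a - 1) ∉ Set.Icc Γ.a Γ.b := by
      rw [Set.mem_Icc]
      intro h
      linarith [h.1]
    have hub : u (Γ.b + 1) = 0 := by
      have hg0 : g (Γ.b + 1) = 0 := image_eq_zero_of_notMem_tsupport (fun h => hmb (hgs h))
      show g (Γ.b + 1) * Γ.Ph (Γ.b + 1) = 0
      rw [hg0, zero_mul]
    have hua : u (Γ.a - 1) = 0 := by
      have hg0 : g (Γ.a - 1) = 0 := image_eq_zero_of_notMem_tsupport (fun h => hma (hgs h))
      show g (Γ.a - 1) * Γ.Ph (Γ.a - 1) = 0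
      rw [hg0, zero_mul]
    rw [hub, hua, sub_zero]
  rw [integral_add hint2 hint1] at htot
  exact eq_neg_of_add_eq_zero_right htot

lemma iter_int : ∀ n : ℕ, ‖∫ t, Γ.w t * Γ.Ph t‖ = ‖∫ t, ((Γ.P)^[n] Γ.w) t * Γ.Ph t‖ := by
  intro n
  induction n with
  | zero => simp
  | succ n ih =>
    obtain ⟨h1, h2⟩ := Γ.Pprops n
    rw [ih, Function.iterate_succ_apply']
    rw [Γ.ibp h1 h2, norm_neg]

lemma int_bound {f : ℝ → ℂ} (hf : Continuous f) (hs : tsupport f ⊆ Set.Icc Γ.a Γ.b)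
    {C : ℝ} (hC : ∀ t ∈ Set.Icc Γ.a Γ.b, ‖f t‖ ≤ C) :
    ‖∫ t, f t * Γ.Ph t‖ ≤ C * (Γ.b - Γ.a) := by
  have hsup : Function.support (fun t => f t * Γ.Ph t) ⊆ Set.Icc Γ.a Γ.b := by
    intro x hx
    simp only [Function.mem_support] at hx
    by_contra hxI
    exact hx (by rw [image_eq_zero_of_notMem_tsupport (fun h => hxI (hs h)), zero_mul])
  have h1 : (∫ t, f t * Γ.Ph t) = ∫ t in Set.Icc Γ.a Γ.b, f t * Γ.Ph t := by
    rw [← integral_indicator measurableSet_Icc, Set.indicator_eq_self.2 hsup]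
  rw [h1]
  have hvol : volume (Set.Icc Γ.a Γ.b) < ⊤ := by
    rw [Real.volume_Icc]
    exact ENNReal.ofReal_lt_top
  have h2 : ‖∫ t in Set.Icc Γ.a Γ.b, f t * Γ.Ph t‖ ≤
      C * (volume (Set.Icc Γ.a Γ.b)).toReal := by
    apply norm_setIntegral_le_of_norm_le_const hvol
    · intro x hxm
      rw [norm_mul, Γ.Ph_norm, mul_one]
      exact hC x hxm
  refine le_trans h2 ?_
  rw [Real.volume_Icc, ENNReal.toReal_ofReal (by linarith [Γ.hab])]

end Ctx

lemma int_bound0 {a b : ℝ} (hab : a ≤ b) {H : ℝ → ℝ} (hH : Continuous H) {f : ℝ → ℂ}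
    (hf : Continuous f) (hs : tsupport f ⊆ Set.Icc a b) {C : ℝ}
    (hC : ∀ t ∈ Set.Icc a b, ‖f t‖ ≤ C) :
    ‖∫ t, f t * Complex.exp (Complex.I * Complex.ofReal (H t))‖ ≤ C * (b - a) := by
  set Ph : ℝ → ℂ := fun t => Complex.exp (Complex.I * Complex.ofReal (H t)) with hPh
  have hPhc : Continuous Ph :=
    Complex.continuous_exp.comp (continuous_const.mul (Complex.continuous_ofReal.comp hH))
  have hPhn : ∀ t, ‖Ph t‖ = 1 := by
    intro t
    rw [hPh]
    simp only
    rw [Complex.norm_exp]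
    have h1 : (Complex.I * Complex.ofReal (H t)).re = 0 := by simp [Complex.mul_re]
    rw [h1, Real.exp_zero]
  have hsup : Function.support (fun t => f t * Ph t) ⊆ Set.Icc a b := by
    intro x hx
    simp only [Function.mem_support] at hx
    by_contra hxI
    exact hx (by rw [image_eq_zero_of_notMem_tsupport (fun h => hxI (hs h)), zero_mul])
  have h1 : (∫ t, f t * Ph t) = ∫ t in Set.Icc a b, f t * Ph t := by
    rw [← integral_indicator measurableSet_Icc, Set.indicator_eq_self.2 hsup]
  show ‖∫ t, f t * Ph t‖ ≤ C * (b - a)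
  rw [h1]
  have hvol : volume (Set.Icc a b) < ⊤ := by
    rw [Real.volume_Icc]; exact ENNReal.ofReal_lt_top
  have h2 : ‖∫ t in Set.Icc a b, f t * Ph t‖ ≤ C * (volume (Set.Icc a b)).toReal := by
    apply norm_setIntegral_le_of_norm_le_const hvol
    · intro x hxm
      rw [norm_mul, hPhn, mul_one]
      exact hC x hxm
  refine le_trans h2 ?_
  rw [Real.volume_Icc, ENNReal.toReal_ofReal (by linarith)]

end BKY8


/-- The non-stationary phase / integration-by-parts lemma (BKY Lemma 8.1): if `w` is smooth,
supported in `[a,b]`, with `|w^{(j)}| ≤ C_j X U^{-j}`, and `H` is smooth real-valued with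
`|H'| ≥ cR` and `|H^{(j)}| ≤ C_j Y Q^{-j}` for `j ≥ 2` on `[a,b]`, then for every `A ≥ 0`
`∫ w(t) e^{iH(t)} dt ≪_{A,C,c} (b−a) X [(QR/√Y)^{-A} + (RU)^{-A}]`. -/
theorem stmt10 (Cj : ℕ → ℝ) (c : ℝ) (hc : 0 < c) (A : ℝ) (hA : 0 ≤ A) :
    ∃ K : ℝ, ∀ (Y X Q U R a b : ℝ) (w : ℝ → ℂ) (H : ℝ → ℝ),
      1 ≤ Y → 0 < X → 0 < Q → 0 < U → 0 < R → a ≤ b →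
      ContDiff ℝ (⊤ : ℕ∞) w → tsupport w ⊆ Set.Icc a b →
      (∀ (j : ℕ) (t : ℝ), ‖iteratedDeriv j w t‖ ≤ Cj j * X * U⁻¹ ^ j) →
      ContDiff ℝ (⊤ : ℕ∞) H →
      (∀ t ∈ Set.Icc a b, c * R ≤ |deriv H t|) →
      (∀ j : ℕ, 2 ≤ j → ∀ t ∈ Set.Icc a b, |iteratedDeriv j H t| ≤ Cj j * Y * Q⁻¹ ^ j) →
      ‖∫ t : ℝ, w t * Complex.exp (Complex.I * (H t : ℂ))‖ ≤
        K * (b - a) * X * ((Q * R / Real.sqrt Y) ^ (-A) + (R * U) ^ (-A)) := by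
  classical
  obtain ⟨n, hn⟩ := exists_nat_ge A
  obtain ⟨D, hD0, hD⟩ := BKY8.wbound Cj c n 0
  refine ⟨max (Cj 0) D + 1, ?_⟩
  intro Y X Q U R a b w H hY hX hQ hU hR hab hw hsupp hwb hH hH1 hHj
  have hsY : 0 < Real.sqrt Y := Real.sqrt_pos.mpr (by linarith)
  have hCj0 : 0 ≤ Cj 0 := by
    have h1 := hwb 0 0
    simp only [iteratedDeriv_zero, pow_zero, mul_one] at h1
    nlinarith [norm_nonneg (w 0)]
  have hKD : 0 ≤ max (Cj 0) D := le_trans hCj0 (le_max_left _ _)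
  set S : ℝ := (Q * R / Real.sqrt Y) ^ (-A) + (R * U) ^ (-A) with hS
  have hS0 : 0 ≤ S :=
    add_nonneg (Real.rpow_nonneg (by positivity) _) (Real.rpow_nonneg (by positivity) _)
  have hXba : 0 ≤ X * (b - a) := mul_nonneg hX.le (by linarith)
  by_cases hcase : 1 ≤ R * U ∧ Real.sqrt Y ≤ Q * R
  · -- main case
    set Γ : BKY8.Ctx Cj c := ⟨Y, X, Q, U, R, a, b, w, H, hc, hY, hX, hQ, hU, hR, hab,
      hw.of_le (by simp), hsupp, hwb, hH.of_le (by simp), hH1, hHj, hcase.1, hcase.2⟩ with hΓ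
    have h1 : ‖∫ t, w t * Complex.exp (Complex.I * (H t : ℂ))‖ =
        ‖∫ t, ((Γ.P)^[n] Γ.w) t * Γ.Ph t‖ := Γ.iter_int n
    obtain ⟨hsm, hsup⟩ := Γ.Pprops n
    have hbound : ∀ t ∈ Set.Icc a b, ‖((Γ.P)^[n] Γ.w) t‖ ≤ D * X * Γ.M ^ n / R ^ n := by
      intro t ht
      have h2 := hD Γ t ht
      rw [iteratedDerivWithin_zero] at h2
      simpa using h2
    have h3 : ‖∫ t, ((Γ.P)^[n] Γ.w) t * Γ.Ph t‖ ≤ (D * X * Γ.M ^ n / R ^ n) * (b - a) :=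
      Γ.int_bound hsm.continuous hsup hbound
    -- analytic estimate on (M/R)^n
    have hMR1 : Γ.M / R ≤ 1 := Γ.hMdivR
    have hMR0 : 0 < Γ.M / R := div_pos Γ.hM0 hR
    have e1 : Γ.M ^ n / R ^ n = (Γ.M / R) ^ n := (div_pow _ _ n).symm
    have h4 : (Γ.M / R) ^ n ≤ (Γ.M / R) ^ A := by
      rw [← Real.rpow_natCast (Γ.M / R) n]
      exact Real.rpow_le_rpow_of_exponent_ge hMR0 hMR1 hn
    have hMdiv : Γ.M / R = max ((R * U)⁻¹) (Real.sqrt Y / (Q * R)) := by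
      show max U⁻¹ (Real.sqrt Y / Q) / R = _
      rw [div_eq_mul_inv, max_mul_of_nonneg _ _ (inv_nonneg.2 hR.le)]
      congr 1
      · rw [← mul_inv]; ring_nf
      · rw [div_mul_eq_div_div, div_div]; ring_nf
    have h5 : (Γ.M / R) ^ A ≤ S := by
      rw [hMdiv]
      have hp0 : (0:ℝ) ≤ (R * U)⁻¹ := by positivity
      have hq0 : (0:ℝ) ≤ Real.sqrt Y / (Q * R) := by positivity
      have hmaxle : (max ((R * U)⁻¹) (Real.sqrt Y / (Q * R))) ^ A ≤
          ((R * U)⁻¹) ^ A + (Real.sqrt Y / (Q * R)) ^ A := by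
        rcases le_total ((R * U)⁻¹) (Real.sqrt Y / (Q * R)) with h | h
        · rw [max_eq_right h]
          exact le_add_of_nonneg_left (Real.rpow_nonneg hp0 A)
        · rw [max_eq_left h]
          exact le_add_of_nonneg_right (Real.rpow_nonneg hq0 A)
      refine le_trans hmaxle ?_
      have e2 : ((R * U)⁻¹) ^ A = (R * U) ^ (-A) := by
        rw [Real.inv_rpow (by positivity), ← Real.rpow_neg (by positivity)]
      have e3 : (Real.sqrt Y / (Q * R)) ^ A = (Q * R / Real.sqrt Y) ^ (-A) := by
        rw [← inv_div (Q * R) (Real.sqrt Y), Real.inv_rpow (by positivity),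
          ← Real.rpow_neg (by positivity)]
      rw [e2, e3, hS]
      linarith
    have h6 : Γ.M ^ n / R ^ n ≤ S := by
      rw [e1]; exact le_trans h4 h5
    rw [h1]
    calc ‖∫ t, ((Γ.P)^[n] Γ.w) t * Γ.Ph t‖ ≤ (D * X * Γ.M ^ n / R ^ n) * (b - a) := h3
      _ = D * (Γ.M ^ n / R ^ n) * (X * (b - a)) := by ring
      _ ≤ D * S * (X * (b - a)) :=
          mul_le_mul_of_nonneg_right (mul_le_mul_of_nonneg_left h6 hD0) hXba
      _ ≤ (max (Cj 0) D + 1) * S * (X * (b - a)) := by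
          refine mul_le_mul_of_nonneg_right (mul_le_mul_of_nonneg_right ?_ hS0) hXba
          have := le_max_right (Cj 0) D
          linarith
      _ = (max (Cj 0) D + 1) * (b - a) * X * S := by ring
  · -- trivial case
    have hwB : ∀ t ∈ Set.Icc a b, ‖w t‖ ≤ Cj 0 * X := by
      intro t _
      have h1 := hwb 0 t
      simpa using h1
    have hb : ‖∫ t, w t * Complex.exp (Complex.I * (H t : ℂ))‖ ≤ (Cj 0 * X) * (b - a) :=
      BKY8.int_bound0 hab hH.continuous hw.continuous hsupp hwB
    have hone : 1 ≤ S := by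
      rw [hS]
      by_cases hRU : 1 ≤ R * U
      · have hQR : Q * R < Real.sqrt Y := by
          by_contra h
          exact hcase ⟨hRU, by linarith⟩
        have hx0 : 0 < Q * R / Real.sqrt Y := by positivity
        have hx1 : Q * R / Real.sqrt Y ≤ 1 := by
          rw [div_le_one hsY]; linarith
        have h2 : (Q * R / Real.sqrt Y) ^ A ≤ 1 := Real.rpow_le_one hx0.le hx1 hA
        have h3 : 0 < (Q * R / Real.sqrt Y) ^ A := Real.rpow_pos_of_pos hx0 A
        have h4 : 1 ≤ (Q * R / Real.sqrt Y) ^ (-A) := by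
          rw [Real.rpow_neg hx0.le]
          nlinarith [mul_inv_cancel₀ h3.ne', inv_nonneg.2 h3.le]
        have h5 : 0 ≤ (R * U) ^ (-A) := Real.rpow_nonneg (by positivity) _
        linarith
      · have hRU' : R * U < 1 := by linarith [not_le.mp hRU]
        have hx0 : 0 < R * U := by positivity
        have h2 : (R * U) ^ A ≤ 1 := Real.rpow_le_one hx0.le hRU'.le hA
        have h3 : 0 < (R * U) ^ A := Real.rpow_pos_of_pos hx0 A
        have h4 : 1 ≤ (R * U) ^ (-A) := by
          rw [Real.rpow_neg hx0.le]
          nlinarith [mul_inv_cancel₀ h3.ne', inv_nonneg.2 h3.le]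
        have h5 : 0 ≤ (Q * R / Real.sqrt Y) ^ (-A) := Real.rpow_nonneg (by positivity) _
        linarith
    refine le_trans hb ?_
    have hK1 : Cj 0 ≤ max (Cj 0) D + 1 := by
      have := le_max_left (Cj 0) D
      linarith
    calc (Cj 0 * X) * (b - a) = Cj 0 * (X * (b - a)) := by ring
      _ ≤ (max (Cj 0) D + 1) * (X * (b - a)) := mul_le_mul_of_nonneg_right hK1 hXba
      _ = (max (Cj 0) D + 1) * (X * (b - a)) * 1 := by ring
      _ ≤ (max (Cj 0) D + 1) * (X * (b - a)) * S := by
          refine mul_le_mul_of_nonneg_left hone ?_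
          exact mul_nonneg (by linarith) hXba
      _ = (max (Cj 0) D + 1) * (b - a) * X * S := by ring
end
end
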